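/- arXiv:1806.01835 — 11 statements merged into one kernel-verified Lean document; each statement's English description precedes it below -/
import Mathlib

section
/- For words w, v over a finite alphabet Σ and n ≥ 2, if w = v is a semigroup identity for the semigroup UT_n of n×n upper triangular matrices over the tropical semiring, then the reversed words rev(w) = rev(v) is also a semigroup identity for UT_n. -/
/-- Tropical (max-plus) matrix multiplication over `ℝ ∪ {-∞}`. -/
noncomputable def tmul {n : ℕ} (A B : Matrix (Fin n) (Fin n) EReal) :
    Matrix (Fin n) (Fin n) EReal :=
  fun i j => ⨆ k, A i k + B k j

/-- The tropical identity matrix: `0` on the diagonal, `-∞` elsewhere. -/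
noncomputable def tOne {n : ℕ} : Matrix (Fin n) (Fin n) EReal :=
  fun i j => if i = j then 0 else ⊥

/-- Tropical product of a list of matrices. -/
noncomputable def tProd {n : ℕ} (l : List (Matrix (Fin n) (Fin n) EReal)) :
    Matrix (Fin n) (Fin n) EReal :=
  l.foldr tmul tOne

/-- A matrix is upper triangular if all entries below the diagonal are `-∞`. -/
def IsUT {n : ℕ} (A : Matrix (Fin n) (Fin n) EReal) : Prop :=
  ∀ i j : Fin n, j < i → A i j = ⊥

/-- `w = v` is a semigroup identity for `UT_n`: every assignment of upper
triangular tropical matrices to the letters gives equal products. -/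
noncomputable def UTId (n : ℕ) {σ : Type*} (w v : List σ) : Prop :=
  ∀ φ : σ → Matrix (Fin n) (Fin n) EReal, (∀ s, IsUT (φ s)) →
    tProd (w.map φ) = tProd (v.map φ)

/-
Reflection in the anti-diagonal is an involution of `UT_n` that reverses tropical products. So for
an upper triangular assignment `φ`, applying `w = v` to the reflected assignment and reflecting back
gives `rev w = rev v` under `φ`.
-/

theorem EReal.add_iSup_of_finite {ι : Type*} [Finite ι] (x : EReal) (f : ι → EReal) :
    x + ⨆ i, f i = ⨆ i, x + f i := by
  cases isEmpty_or_nonempty ι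
  · simp
  · exact Finite.map_iSup_of_monotone f fun _ _ h => add_le_add_right h x

theorem EReal.iSup_add_of_finite {ι : Type*} [Finite ι] (x : EReal) (f : ι → EReal) :
    (⨆ i, f i) + x = ⨆ i, f i + x := by
  simp only [add_comm _ x, EReal.add_iSup_of_finite]

section TropicalMatrix

variable {n : ℕ}

theorem tmul_assoc (A B C : Matrix (Fin n) (Fin n) EReal) :
    tmul (tmul A B) C = tmul A (tmul B C) := by
  funext i j
  simp only [tmul, EReal.iSup_add_of_finite, EReal.add_iSup_of_finite, add_assoc]
  exact iSup_comm

theorem tmul_tOne (A : Matrix (Fin n) (Fin n) EReal) : tmul A tOne = A := by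
  funext i j
  refine le_antisymm (iSup_le fun k => ?_) (le_iSup_of_le j (by simp [tOne]))
  rcases eq_or_ne k j with rfl | hk <;> simp [tOne, *]

theorem tOne_tmul (A : Matrix (Fin n) (Fin n) EReal) : tmul tOne A = A := by
  funext i j
  refine le_antisymm (iSup_le fun k => ?_) (le_iSup_of_le i (by simp [tOne]))
  rcases eq_or_ne i k with rfl | hk <;> simp [tOne, *]

theorem tProd_cons (A : Matrix (Fin n) (Fin n) EReal) (l : List (Matrix (Fin n) (Fin n) EReal)) :
    tProd (A :: l) = tmul A (tProd l) :=
  rfl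

theorem tProd_singleton (A : Matrix (Fin n) (Fin n) EReal) : tProd [A] = A :=
  tmul_tOne A

theorem tProd_append (l₁ l₂ : List (Matrix (Fin n) (Fin n) EReal)) :
    tProd (l₁ ++ l₂) = tmul (tProd l₁) (tProd l₂) := by
  induction l₁ with
  | nil => exact (tOne_tmul _).symm
  | cons A l ih => rw [List.cons_append, tProd_cons, tProd_cons, ih, tmul_assoc]

def antiTranspose (A : Matrix (Fin n) (Fin n) EReal) : Matrix (Fin n) (Fin n) EReal :=
  fun i j => A j.rev i.rev

theorem antiTranspose_antiTranspose (A : Matrix (Fin n) (Fin n) EReal) :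
    antiTranspose (antiTranspose A) = A := by
  funext i j
  simp [antiTranspose]

theorem antiTranspose_tOne : antiTranspose (tOne (n := n)) = tOne := by
  funext i j
  simp only [antiTranspose, tOne, Fin.rev_inj, eq_comm]

theorem antiTranspose_tmul (A B : Matrix (Fin n) (Fin n) EReal) :
    antiTranspose (tmul A B) = tmul (antiTranspose B) (antiTranspose A) := by
  funext i j
  simp only [antiTranspose, tmul]
  rw [← Fin.revPerm.iSup_comp]
  exact iSup_congr fun k => by simp [add_comm]

theorem IsUT.antiTranspose {A : Matrix (Fin n) (Fin n) EReal} (hA : IsUT A) :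
    IsUT (antiTranspose A) :=
  fun _ _ hji => hA _ _ (Fin.rev_lt_rev.mpr hji)

theorem antiTranspose_tProd (l : List (Matrix (Fin n) (Fin n) EReal)) :
    antiTranspose (tProd l) = tProd (l.reverse.map antiTranspose) := by
  induction l with
  | nil => exact antiTranspose_tOne
  | cons A l ih =>
    rw [tProd_cons, antiTranspose_tmul, ih, List.reverse_cons, List.map_append, tProd_append,
      List.map_singleton, tProd_singleton]

theorem tProd_map_reverse {σ : Type*} (φ : σ → Matrix (Fin n) (Fin n) EReal) (u : List σ) :
    tProd (u.reverse.map φ) = antiTranspose (tProd (u.map fun s => antiTranspose (φ s))) := by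
  rw [antiTranspose_tProd, ← List.map_reverse, List.map_map]
  simp only [Function.comp_def, antiTranspose_antiTranspose]

end TropicalMatrix

theorem utId_reverse_general {σ : Type*} (n : ℕ)
    (w v : List σ) (h : UTId n w v) :
    UTId n w.reverse v.reverse := by
  intro φ hφ
  rw [tProd_map_reverse, tProd_map_reverse, h _ fun s => (hφ s).antiTranspose]

/-- If `w ∼_n v` then `rev(w) ∼_n rev(v)`. -/
theorem utId_reverse {σ : Type*} [Fintype σ] (n : ℕ) (hn : 2 ≤ n)
    (w v : List σ) (hw : w ≠ []) (hv : v ≠ []) (h : UTId n w v) :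
    UTId n w.reverse v.reverse :=
  utId_reverse_general n w v h
end

section
/- Let c ∈ ℝ_{≥0}^m with c_j ≠ 0 for some index j, and let B = {p ∈ ℝ_{≥0}^m : p_j = 0 and p_i ≤ c_j for all i ≠ j}. If P and Q are finite sets of points with P ⊆ B and Q ⊆ c + ℝ_{≥0}^m, then every vertex (extreme point) of conv(P) is a vertex of conv(P ∪ Q). -/
private lemma eval_linear {m : ℕ} (j : Fin m) :
    IsLinearMap ℝ (fun y : Fin m → ℝ => y j) :=
  ⟨fun _ _ => rfl, fun _ _ => rfl⟩

/-- Every vertex (extreme point) of `conv(P)` remains a vertex of `conv(P ∪ Q)`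
when `P` lies in the box `{p ≥ 0 : p_j = 0, p_i ≤ c_j (i ≠ j)}` and `Q` lies in
the translated orthant `c + ℝ_{≥0}^m`. -/
theorem extremePoints_subset_of_box_and_cone {m : ℕ} (c : Fin m → ℝ)
    (hc : ∀ i, 0 ≤ c i) (j : Fin m) (hj : c j ≠ 0)
    (P Q : Finset (Fin m → ℝ))
    (hP : ∀ p ∈ P, (∀ i, 0 ≤ p i) ∧ p j = 0 ∧ ∀ i, i ≠ j → p i ≤ c j)
    (hQ : ∀ q ∈ Q, ∀ i, c i ≤ q i) :
    (convexHull ℝ (P : Set (Fin m → ℝ))).extremePoints ℝ ⊆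
      (convexHull ℝ ((P : Set (Fin m → ℝ)) ∪ (Q : Set (Fin m → ℝ)))).extremePoints ℝ := by
  have hcj : 0 < c j := lt_of_le_of_ne (hc j) (Ne.symm hj)
  -- conv P ⊆ {y | y j = 0}
  have hPj : convexHull ℝ (P : Set (Fin m → ℝ)) ⊆ {y | y j = 0} := by
    apply convexHull_min
    · intro p hp; exact (hP p hp).2.1
    · exact convex_hyperplane (eval_linear j) 0
  -- conv Q ⊆ {y | c j ≤ y j}
  have hQj : convexHull ℝ (Q : Set (Fin m → ℝ)) ⊆ {y | c j ≤ y j} := by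
    apply convexHull_min
    · intro q hq; exact hQ q hq j
    · exact convex_halfSpace_ge (eval_linear j) (c j)
  -- conv (P ∪ Q) ⊆ {y | 0 ≤ y j}
  have hUj : convexHull ℝ ((P : Set (Fin m → ℝ)) ∪ (Q : Set (Fin m → ℝ)))
      ⊆ {y | 0 ≤ y j} := by
    apply convexHull_min
    · rintro p (hp | hq)
      · exact le_of_eq ((hP p hp).2.1).symm
      · exact (hc j).trans (hQ p hq j)
    · exact convex_halfSpace_ge (eval_linear j) 0
  -- Key: points of conv (P ∪ Q) with j-coordinate 0 lie in conv P
  have key : ∀ y ∈ convexHull ℝ ((P : Set (Fin m → ℝ)) ∪ (Q : Set (Fin m → ℝ))),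
      y j = 0 → y ∈ convexHull ℝ (P : Set (Fin m → ℝ)) := by
    intro y hy hyj
    rcases (Q : Set (Fin m → ℝ)).eq_empty_or_nonempty with hQe | hQne
    · rwa [hQe, Set.union_empty] at hy
    have hPne : (P : Set (Fin m → ℝ)).Nonempty := by
      by_contra hPe
      rw [Set.not_nonempty_iff_eq_empty] at hPe
      rw [hPe, Set.empty_union] at hy
      have := hQj hy
      simp only [Set.mem_setOf_eq, hyj] at this
      linarith
    rw [convexHull_union hPne hQne, mem_convexJoin] at hy
    obtain ⟨u, hu, v, hv, hseg⟩ := hy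
    obtain ⟨a, b, ha, hb, hab, hy⟩ := hseg
    have huj : u j = 0 := hPj hu
    have hvj : c j ≤ v j := hQj hv
    have hyj' : y j = a * u j + b * v j := by
      rw [← hy]; simp [Pi.add_apply]
    have hb0 : b = 0 := by
      by_contra hb0
      have : 0 < b := lt_of_le_of_ne hb (Ne.symm hb0)
      nlinarith
    have : a = 1 := by linarith
    rw [this, hb0, one_smul, zero_smul, add_zero] at hy
    rwa [← hy]
  rintro x ⟨hxP, hx⟩
  have hxU : x ∈ convexHull ℝ ((P : Set (Fin m → ℝ)) ∪ (Q : Set (Fin m → ℝ))) :=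
    convexHull_mono Set.subset_union_left hxP
  refine ⟨hxU, ?_⟩
  intro y hy z hz hseg
  have hxj : x j = 0 := hPj hxP
  obtain ⟨a, b, ha, hb, hab, hx'⟩ := hseg
  have hyj : 0 ≤ y j := hUj hy
  have hzj : 0 ≤ z j := hUj hz
  have hsum : a * y j + b * z j = 0 := by
    have : x j = a * y j + b * z j := by rw [← hx']; simp [Pi.add_apply]
    linarith [this ▸ hxj]
  have hyj0 : y j = 0 := by nlinarith
  have hzj0 : z j = 0 := by nlinarith
  exact hx (key y hy hyj0) (key z hz hzj0) ⟨a, b, ha, hb, hab, hx'⟩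
end

section
/- For a word w over the alphabet {a_1, ..., a_m} and each i, the support of the degree-one tropical polynomial g_i^w (in variables x_1, ..., x_m) equals the a_i-height γ^{w,a_i} of the staircase path of w; explicitly, the support is {c(w_1⋯w_{h-1}) : w_h = a_i}, the set of contents of prefixes of w ending just before an occurrence of a_i, and this set equals {max{p ∈ γ^w : p_i = j} : 0 ≤ j ≤ |w|_{a_i} - 1}. -/
/-!
Along the prefixes `w.take t`, the count of `i` goes up by one exactly when `t` steps past an
occurrence of `i`. Hence if `w[h] = i`, every prefix with as many `i`s as `w.take h` is a prefix
of `w.take h`, so `content (w.take h)` is the largest point of the path at that `i`-level.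
Conversely, for a level `j < |w|_i` the largest point is reached just before the next occurrence
of `i` after any prefix at level `j`.
-/

/-- The content of a word over the alphabet `Fin m`: the number of occurrences
of each letter. -/
def content {m : ℕ} (u : List (Fin m)) : Fin m → ℕ := fun s => u.count s

/-- The staircase path of `w`: the set of contents of all prefixes of `w`. -/
def gammaPath {m : ℕ} (w : List (Fin m)) : Set (Fin m → ℕ) :=
  {p | ∃ t ≤ w.length, p = content (w.take t)}

namespace List

variable {α : Type*} [BEq α]

theorem monotone_count_take (w : List α) (a : α) : Monotone fun t => (w.take t).count a :=
  fun _ _ h => (take_prefix_take_left h).sublist.count_le a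

theorem count_take_lt_of_getElem_eq [LawfulBEq α] {w : List α} {a : α} {h t : ℕ}
    (hh : h < w.length) (ha : w[h] = a) (ht : h < t) :
    (w.take h).count a < (w.take t).count a := by
  have hsucc : (w.take (h + 1)).count a = (w.take h).count a + 1 := by
    rw [← take_concat_get' w h hh, count_append, ha, count_singleton_self]
  have hmono : (w.take (h + 1)).count a ≤ (w.take t).count a := monotone_count_take w a ht
  omega

theorem exists_getElem_eq_of_count_take_lt [LawfulBEq α] {w : List α} {a : α} {t : ℕ}
    (ht : (w.take t).count a < w.count a) :
    ∃ (s : ℕ) (hs : s < w.length), t ≤ s ∧ w[s] = a ∧ (w.take s).count a = (w.take t).count a := by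
  induction w generalizing t with
  | nil => simp at ht
  | cons x w ih =>
    rcases t with _ | t
    · by_cases hx : x = a
      · exact ⟨0, by simp, le_rfl, hx, rfl⟩
      · obtain ⟨s, hs, -, hsa, hcount⟩ := ih (t := 0) (by simpa [count_cons, hx] using ht)
        exact ⟨s + 1, by simpa using hs, by omega, hsa, by simpa [count_cons, hx] using hcount⟩
    · obtain ⟨s, hs, hts, hsa, hcount⟩ := ih (t := t) (by simpa [count_cons] using ht)
      exact ⟨s + 1, by simpa using hs, by omega, hsa, by simp [count_cons, hcount]⟩

end List

theorem monotone_content_take {m : ℕ} (w : List (Fin m)) :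
    Monotone fun t => content (w.take t) :=
  fun _ _ h s => List.monotone_count_take w s h

/-- The support of the degree-one tropical polynomial `g_i^w`, i.e. the set of
contents of prefixes of `w` ending just before an occurrence of the letter `i`,
equals the `a_i`-height of the staircase path of `w`: the set of coordinatewise
maxima `max{p ∈ γ^w : p_i = j}` for `0 ≤ j < |w|_{a_i}`. -/
theorem support_eq_height {m : ℕ} (w : List (Fin m)) (i : Fin m) :
    {p : Fin m → ℕ | ∃ h : Fin w.length, w.get h = i ∧ p = content (w.take h)} =
      {q : Fin m → ℕ | ∃ j < w.count i, q ∈ gammaPath w ∧ q i = j ∧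
        ∀ p ∈ gammaPath w, p i = j → p ≤ q} := by
  ext q
  constructor
  · rintro ⟨⟨h, hh⟩, hi, rfl⟩
    have hlt := fun t => List.count_take_lt_of_getElem_eq (t := t) hh hi
    refine ⟨_, by simpa [content] using hlt w.length hh, ⟨h, hh.le, rfl⟩, rfl, ?_⟩
    rintro _ ⟨t, -, rfl⟩ hq
    exact monotone_content_take w (not_lt.1 fun ht => (hlt t ht).ne' hq)
  · rintro ⟨j, hj, ⟨t, -, rfl⟩, rfl, hmax⟩
    obtain ⟨s, hs, hts, hsi, hcount⟩ := List.exists_getElem_eq_of_count_take_lt hj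
    exact ⟨⟨s, hs⟩, hsi, (monotone_content_take w hts).antisymm (hmax _ ⟨s, hs.le, rfl⟩ hcount)⟩
end

section
/- Let w, v be words over {a, b} with the same content (ℓ_a, ℓ_b), and suppose conv(γ^{w,a}) = conv(γ^{v,a}) and conv(γ^{w,b}) = conv(γ^{v,b}) (i.e., w ∼_2 v). If u is a word with the same content such that α^w_k ≤ α^u_k ≤ α^v_k for all k, then conv(γ^{u,a}) = conv(γ^{w,a}) and conv(γ^{u,b}) = conv(γ^{w,b}). -/
/-- The letter `a` of the two-letter alphabet, encoded as `true`. -/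
def ltrA : Bool := true

/-- The letter `b` of the two-letter alphabet, encoded as `false`. -/
def ltrB : Bool := false

/-- `alphaH w i` is the number of `b`'s occurring before the `(i+1)`-th `a` in `w`. -/
def alphaH : List Bool → ℕ → ℕ
  | [], _ => 0
  | (x :: rest), i =>
      if x = ltrA then (if i = 0 then 0 else alphaH rest (i - 1))
      else alphaH rest i + 1

/-- `betaH w i` is the number of `a`'s occurring before the `(i+1)`-th `b` in `w`. -/
def betaH (w : List Bool) (i : ℕ) : ℕ := alphaH (w.map (!·)) i

/-- The `a`-height `γ^{w,a} = {(i, α^w_i) : 0 ≤ i < ℓ_a}`, as a subset of `ℝ²`. -/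
def gammaA (w : List Bool) : Set (ℝ × ℝ) :=
  {p | ∃ i, i < w.count ltrA ∧ p = ((i : ℝ), (alphaH w i : ℝ))}

/-- The `b`-height `γ^{w,b} = {(β^w_i, i) : 0 ≤ i < ℓ_b}`, as a subset of `ℝ²`. -/
def gammaB (w : List Bool) : Set (ℝ × ℝ) :=
  {p | ∃ i, i < w.count ltrB ∧ p = ((betaH w i : ℝ), (i : ℝ))}

/-! ### Combinatorial lemmas -/

lemma alphaH_le_count_false (w : List Bool) (k : ℕ) : alphaH w k ≤ w.count false := by
  induction w generalizing k with
  | nil => simp [alphaH]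
  | cons x rest ih =>
    cases x with
    | true =>
      simp only [alphaH, ltrA, if_pos rfl]
      rcases Nat.eq_zero_or_pos k with h | h
      · simp [h]
      · simp only [Nat.pos_iff_ne_zero.mp h, if_neg (Nat.pos_iff_ne_zero.mp h)]
        calc alphaH rest (k-1) ≤ rest.count false := ih _
        _ ≤ (true :: rest).count false := by simp [List.count_cons]
    | false =>
      simp only [alphaH, ltrA]
      simp [List.count_cons]
      exact ih k

lemma count_map_not_true (w : List Bool) : (w.map (!·)).count true = w.count false := by
  induction w with
  | nil => rfl
  | cons x rest ih => cases x <;> simp [List.count_cons, ih]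

lemma count_map_not_false (w : List Bool) : (w.map (!·)).count false = w.count true := by
  induction w with
  | nil => rfl
  | cons x rest ih => cases x <;> simp [List.count_cons, ih]

lemma key_iff (w : List Bool) (k i : ℕ) (hk : k < w.count true) (hi : i < w.count false) :
    alphaH w k ≤ i ↔ k < alphaH (w.map (!·)) i := by
  induction w generalizing k i with
  | nil => simp at hk
  | cons x rest ih =>
    cases x with
    | true =>
      have h1 : alphaH (true :: rest) k = if k = 0 then 0 else alphaH rest (k-1) := by
        simp [alphaH, ltrA]
      have h2 : alphaH ((true :: rest).map (!·)) i = alphaH (rest.map (!·)) i + 1 := by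
        simp [alphaH, ltrA]
      rw [h1, h2]
      rcases Nat.eq_zero_or_pos k with h | h
      · simp [h]
      · have hk0 : k ≠ 0 := Nat.pos_iff_ne_zero.mp h
        rw [if_neg hk0]
        have hk' : k - 1 < rest.count true := by
          have : k < rest.count true + 1 := by simpa [List.count_cons] using hk
          omega
        have hi' : i < rest.count false := by simpa [List.count_cons] using hi
        rw [ih (k-1) i hk' hi']
        omega
    | false =>
      have h1 : alphaH (false :: rest) k = alphaH rest k + 1 := by simp [alphaH, ltrA]
      have h2 : alphaH ((false :: rest).map (!·)) i
          = if i = 0 then 0 else alphaH (rest.map (!·)) (i-1) := by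
        simp [alphaH, ltrA]
      rw [h1, h2]
      rcases Nat.eq_zero_or_pos i with h | h
      · simp [h]
      · have hi0 : i ≠ 0 := Nat.pos_iff_ne_zero.mp h
        rw [if_neg hi0]
        have hk' : k < rest.count true := by simpa [List.count_cons] using hk
        have hi' : i - 1 < rest.count false := by
          have : i < rest.count false + 1 := by simpa [List.count_cons] using hi
          omega
        have := ih k (i-1) hk' hi'
        omega

lemma betaH_le_count_true (w : List Bool) (i : ℕ) : betaH w i ≤ w.count true := by
  have := alphaH_le_count_false (w.map (!·)) i
  rwa [count_map_not_false] at this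

lemma beta_mono (w u : List Bool)
    (hct : u.count true = w.count true) (hcf : u.count false = w.count false)
    (h : ∀ k < w.count true, alphaH w k ≤ alphaH u k) :
    ∀ i < w.count false, betaH u i ≤ betaH w i := by
  intro i hi
  by_contra hlt
  push_neg at hlt
  set k := betaH w i with hk
  have hku : k < betaH u i := hlt
  have hkub : k < u.count true := lt_of_lt_of_le hku (betaH_le_count_true u i)
  have hkw : k < w.count true := hct ▸ hkub
  have hiu : i < u.count false := hcf ▸ hi
  have h1 : alphaH u k ≤ i := (key_iff u k i hkub hiu).mpr hku
  have h2 : alphaH w k ≤ i := le_trans (h k hkw) h1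
  have h3 : k < betaH w i := (key_iff w k i hkw hi).mp h2
  omega

/-! ### Geometric lemmas -/

lemma hull_sandwich {S T : Set (ℝ × ℝ)} (hS : S.Finite) (hT : T.Finite)
    (hsub : T ⊆ convexHull ℝ S)
    (hext : (convexHull ℝ S).extremePoints ℝ ⊆ T) :
    convexHull ℝ T = convexHull ℝ S := by
  apply le_antisymm
  · exact convexHull_min hsub (convex_convexHull ℝ S)
  · have hKM := closure_convexHull_extremePoints
      (hS.isCompact_convexHull ℝ) (convex_convexHull ℝ S)
    calc convexHull ℝ S
        = closure (convexHull ℝ ((convexHull ℝ S).extremePoints ℝ)) := hKM.symm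
      _ ⊆ closure (convexHull ℝ T) := closure_mono (convexHull_mono hext)
      _ = convexHull ℝ T := (hT.isClosed_convexHull ℝ).closure_eq

lemma mem_hull_between {H : Set (ℝ × ℝ)} (hH : Convex ℝ H) {x yw yu yv : ℝ}
    (h1 : (x, yw) ∈ H) (h2 : (x, yv) ∈ H) (hwu : yw ≤ yu) (huv : yu ≤ yv) :
    (x, yu) ∈ H := by
  rcases eq_or_lt_of_le (le_trans hwu huv) with h | h
  · have : yu = yw := le_antisymm (h ▸ huv) hwu
    rwa [this]
  · set a : ℝ := (yv - yu) / (yv - yw) with ha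
    set b : ℝ := (yu - yw) / (yv - yw) with hb
    have hd : (0:ℝ) < yv - yw := by linarith
    have hA : 0 ≤ a := div_nonneg (by linarith) hd.le
    have hB : 0 ≤ b := div_nonneg (by linarith) hd.le
    have hab : a + b = 1 := by rw [ha, hb, ← add_div]; field_simp; ring
    have := hH h1 h2 hA hB hab
    convert this using 1
    have h1 : a • ((x, yw) : ℝ × ℝ) + b • (x, yv) = (a*x + b*x, a*yw + b*yv) := rfl
    rw [h1]
    have hx : a*x + b*x = x := by rw [← add_mul, hab, one_mul]
    have hy : a*yw + b*yv = yu := by rw [ha, hb]; field_simp; ring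
    rw [hx, hy]

lemma gammaA_finite (w : List Bool) : (gammaA w).Finite := by
  have : gammaA w ⊆ (fun i : ℕ => ((i : ℝ), (alphaH w i : ℝ))) '' (Set.Iio (w.count ltrA)) := by
    rintro p ⟨i, hi, rfl⟩
    exact ⟨i, hi, rfl⟩
  exact Set.Finite.subset ((Set.finite_Iio _).image _) this

/-- Sandwich theorem for the `a`-heights alone. -/
lemma sandwichA (w u v : List Bool)
    (hcau : u.count ltrA = w.count ltrA) (hcav : v.count ltrA = w.count ltrA)
    (hA : convexHull ℝ (gammaA w) = convexHull ℝ (gammaA v))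
    (hb : ∀ k < w.count ltrA, alphaH w k ≤ alphaH u k ∧ alphaH u k ≤ alphaH v k) :
    convexHull ℝ (gammaA u) = convexHull ℝ (gammaA w) := by
  have hsub : gammaA u ⊆ convexHull ℝ (gammaA w) := by
    rintro p ⟨i, hi, rfl⟩
    have hiw : i < w.count ltrA := hcau ▸ hi
    have hw : ((i : ℝ), (alphaH w i : ℝ)) ∈ convexHull ℝ (gammaA w) :=
      subset_convexHull ℝ _ ⟨i, hiw, rfl⟩
    have hv : ((i : ℝ), (alphaH v i : ℝ)) ∈ convexHull ℝ (gammaA w) := by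
      rw [hA]
      exact subset_convexHull ℝ _ ⟨i, hcav ▸ hiw, rfl⟩
    exact mem_hull_between (convex_convexHull ℝ _) hw hv
      (Nat.cast_le.mpr (hb i hiw).1) (Nat.cast_le.mpr (hb i hiw).2)
  have hext : (convexHull ℝ (gammaA w)).extremePoints ℝ ⊆ gammaA u := by
    intro p hp
    have hpw : p ∈ gammaA w := extremePoints_convexHull_subset hp
    have hpv : p ∈ gammaA v := extremePoints_convexHull_subset (hA ▸ hp)
    obtain ⟨k, hk, hpk⟩ := hpw
    obtain ⟨j, hj, hpj⟩ := hpv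
    have hkj : (k : ℝ) = (j : ℝ) := by
      have := hpk ▸ hpj; exact (Prod.mk.injEq _ _ _ _).mp this |>.1
    have hkj' : k = j := Nat.cast_injective hkj
    subst hkj'
    have hww : (alphaH w k : ℝ) = (alphaH v k : ℝ) := by
      have := hpk ▸ hpj; exact (Prod.mk.injEq _ _ _ _).mp this |>.2
    have hwv : alphaH w k = alphaH v k := Nat.cast_injective hww
    have hu : alphaH u k = alphaH w k := by
      have := hb k hk; omega
    exact ⟨k, hcau ▸ hk, by rw [hpk, hu]⟩
  exact hull_sandwich (gammaA_finite w) (gammaA_finite u) hsub hext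

lemma gammaB_eq_swap (w : List Bool) :
    gammaB w = Prod.swap '' gammaA (w.map (!·)) := by
  ext p
  constructor
  · rintro ⟨i, hi, rfl⟩
    refine ⟨((i : ℝ), (betaH w i : ℝ)), ⟨i, ?_, rfl⟩, rfl⟩
    show i < (w.map (!·)).count true
    rw [count_map_not_true]; exact hi
  · rintro ⟨q, ⟨i, hi, rfl⟩, rfl⟩
    refine ⟨i, ?_, rfl⟩
    show i < w.count false
    rw [← count_map_not_true]; exact hi

lemma hull_gammaB (w : List Bool) :
    convexHull ℝ (gammaB w) = Prod.swap '' convexHull ℝ (gammaA (w.map (!·))) := by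
  rw [gammaB_eq_swap]
  exact ((LinearEquiv.prodComm ℝ ℝ ℝ).toLinearMap.image_convexHull _).symm

/-- Structural Theorem, part (i): if `w ∼_2 v` and the path of `u` lies weakly
between those of `w` and `v`, then `u ∼_2 w`. -/
theorem sandwich_sim2 (w u v : List Bool)
    (hca : u.count ltrA = w.count ltrA ∧ v.count ltrA = w.count ltrA)
    (hcb : u.count ltrB = w.count ltrB ∧ v.count ltrB = w.count ltrB)
    (hA : convexHull ℝ (gammaA w) = convexHull ℝ (gammaA v))
    (hB : convexHull ℝ (gammaB w) = convexHull ℝ (gammaB v))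
    (hbetween : ∀ k < w.count ltrA, alphaH w k ≤ alphaH u k ∧ alphaH u k ≤ alphaH v k) :
    convexHull ℝ (gammaA u) = convexHull ℝ (gammaA w) ∧
      convexHull ℝ (gammaB u) = convexHull ℝ (gammaB w) := by
  obtain ⟨hcau, hcav⟩ := hca
  obtain ⟨hcbu, hcbv⟩ := hcb
  constructor
  · exact sandwichA w u v hcau hcav hA hbetween
  · -- transfer hB to a statement about flipped words
    have hA' : convexHull ℝ (gammaA (w.map (!·))) = convexHull ℝ (gammaA (v.map (!·))) := by
      have := hB
      rw [hull_gammaB, hull_gammaB] at this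
      exact Set.image_injective.mpr Prod.swap_injective this
    -- β-monotonicity
    have hbuw : ∀ i < w.count ltrB, betaH u i ≤ betaH w i :=
      beta_mono w u hcau hcbu (fun k hk => (hbetween k hk).1)
    have hbvu : ∀ i < u.count ltrB, betaH v i ≤ betaH u i := by
      have := beta_mono u v (hcav.trans hcau.symm) (hcbv.trans hcbu.symm)
        (fun k hk => by
          have hk' : k < w.count ltrA := hcau ▸ hk
          exact (hbetween k hk').2)
      intro i hi
      exact this i hi
    -- apply sandwichA to the flipped words, with roles of w and v exchanged
    have hmain : convexHull ℝ (gammaA (u.map (!·))) = convexHull ℝ (gammaA (v.map (!·))) := by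
      apply sandwichA (v.map (!·)) (u.map (!·)) (w.map (!·))
      · show (u.map (!·)).count true = (v.map (!·)).count true
        rw [count_map_not_true, count_map_not_true]
        exact hcbu.trans hcbv.symm
      · show (w.map (!·)).count true = (v.map (!·)).count true
        rw [count_map_not_true, count_map_not_true]
        exact hcbv.symm
      · exact hA'.symm
      · intro k hk
        have hk' : k < v.count ltrB := by
          have : (v.map (!·)).count ltrA = v.count ltrB := count_map_not_true v
          omega
        have hkw : k < w.count ltrB := hcbv ▸ hk'
        have hku : k < u.count ltrB := by rw [hcbu]; exact hkw
        exact ⟨hbvu k hku, hbuw k hkw⟩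
    rw [hull_gammaB, hull_gammaB, hmain, ← hA']
end

section
/- Let w, v be words over {a, b} with the same content such that conv(γ^{w,a}) = conv(γ^{v,a}) and conv(γ^{w,b}) = conv(γ^{v,b}). Then the lattice meet w ∧ v and join w ∨ v (taken in the distributive lattice of staircase paths with this content) also satisfy conv(γ^{w∧v,a}) = conv(γ^{w,a}), conv(γ^{w∧v,b}) = conv(γ^{w,b}), conv(γ^{w∨v,a}) = conv(γ^{w,a}), and conv(γ^{w∨v,b}) = conv(γ^{w,b}). -/
/-!
The a-heights and the b-heights of a word are Galois-adjoint: for `j < ℓ_a`,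
`α_j ≤ i ↔ j < β_i`. Hence the pointwise minimum of the a-heights of `w` and `v` has as b-heights
the pointwise maximum of theirs, and vice versa. In either case each height of the new word is the
corresponding height of `w` or of `v`, so its height set `T` lies between `S ∩ S'` and `S ∪ S'`,
where `S`, `S'` are the height sets of `w`, `v`. If `conv S = conv S'`, every vertex of this common
polytope lies in `S ∩ S' ⊆ T`, so by Krein–Milman `conv T = conv S`.
-/

open Set

section ConvexHull

variable {E : Type*} [AddCommGroup E] [Module ℝ E] [TopologicalSpace E] [T2Space E]
  [IsTopologicalAddGroup E] [ContinuousSMul ℝ E] [LocallyConvexSpace ℝ E]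

theorem convexHull_eq_of_inter_subset_of_subset_union {S S' T : Set E} (hS : S.Finite)
    (hT : T.Finite) (hSS' : convexHull ℝ S = convexHull ℝ S') (hinter : S ∩ S' ⊆ T)
    (hunion : T ⊆ S ∪ S') : convexHull ℝ T = convexHull ℝ S := by
  refine (convexHull_min ?_ (convex_convexHull ℝ S)).antisymm ?_
  · refine hunion.trans (union_subset (subset_convexHull ℝ S) ?_)
    exact hSS' ▸ subset_convexHull ℝ S'
  · set K := convexHull ℝ S
    have hext : K.extremePoints ℝ ⊆ T := fun x hx =>
      hinter ⟨extremePoints_convexHull_subset hx, extremePoints_convexHull_subset (hSS' ▸ hx)⟩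
    calc K = closure (convexHull ℝ (K.extremePoints ℝ)) :=
          (closure_convexHull_extremePoints (hS.isCompact_convexHull ℝ)
            (convex_convexHull ℝ S)).symm
      _ ⊆ closure (convexHull ℝ T) := closure_mono (convexHull_mono hext)
      _ = convexHull ℝ T := (hT.isClosed_convexHull ℝ).closure_eq

theorem convexHull_image_eq_of_forall_eq_or_eq {ι α : Type*} {e : ι → α → E}
    (he : Function.Injective2 e) {s : Set ι} (hs : s.Finite) {f g h : ι → α}
    (hfg : convexHull ℝ ((fun i ↦ e i (f i)) '' s) = convexHull ℝ ((fun i ↦ e i (g i)) '' s))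
    (hh : ∀ i ∈ s, h i = f i ∨ h i = g i) :
    convexHull ℝ ((fun i ↦ e i (h i)) '' s) = convexHull ℝ ((fun i ↦ e i (f i)) '' s) := by
  refine convexHull_eq_of_inter_subset_of_subset_union (hs.image _) (hs.image _) hfg ?_ ?_
  · rintro _ ⟨⟨i, hi, rfl⟩, ⟨j, -, hji⟩⟩
    obtain ⟨rfl, hgf⟩ := he hji
    refine ⟨j, hi, ?_⟩
    rcases hh j hi with hhj | hhj <;> simp only [hhj, hgf]
  · rintro _ ⟨i, hi, rfl⟩
    rcases hh i hi with hhi | hhi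
    · exact Or.inl ⟨i, hi, by simp only [hhi]⟩
    · exact Or.inr ⟨i, hi, by simp only [hhi]⟩

end ConvexHull

section Heights

@[simp] theorem count_ltrA_cons (x : Bool) (w : List Bool) :
    (x :: w).count ltrA = w.count ltrA + if x then 1 else 0 := by
  cases x <;> simp [ltrA]

@[simp] theorem alphaH_true_cons_zero (w : List Bool) : alphaH (true :: w) 0 = 0 := rfl

@[simp] theorem alphaH_true_cons_succ (w : List Bool) (i : ℕ) :
    alphaH (true :: w) (i + 1) = alphaH w i := rfl

@[simp] theorem alphaH_false_cons (w : List Bool) (i : ℕ) :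
    alphaH (false :: w) i = alphaH w i + 1 := rfl

@[simp] theorem betaH_nil (i : ℕ) : betaH [] i = 0 := rfl

@[simp] theorem betaH_true_cons (w : List Bool) (i : ℕ) :
    betaH (true :: w) i = betaH w i + 1 := rfl

@[simp] theorem betaH_false_cons_zero (w : List Bool) : betaH (false :: w) 0 = 0 := rfl

@[simp] theorem betaH_false_cons_succ (w : List Bool) (i : ℕ) :
    betaH (false :: w) (i + 1) = betaH w i := rfl

theorem lt_betaH_iff (w : List Bool) (i j : ℕ) :
    j < betaH w i ↔ j < w.count ltrA ∧ alphaH w j ≤ i := by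
  induction w generalizing i j with
  | nil => simp
  | cons x w ih =>
    cases x with
    | false => cases i <;> simp [ih]
    | true => cases j <;> simp [ih]

variable {w v u : List Bool}

theorem betaH_eq_max_of_alphaH_eq_min (hva : v.count ltrA = w.count ltrA)
    (hua : u.count ltrA = w.count ltrA)
    (hmin : ∀ j < w.count ltrA, alphaH u j = min (alphaH w j) (alphaH v j)) (i : ℕ) :
    betaH u i = max (betaH w i) (betaH v i) := by
  refine eq_of_forall_lt_iff fun j ↦ ?_
  simp only [lt_max_iff, lt_betaH_iff, hua, hva]
  by_cases hj : j < w.count ltrA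
  · simp [hj, hmin j hj]
  · simp [hj]

theorem betaH_eq_min_of_alphaH_eq_max (hva : v.count ltrA = w.count ltrA)
    (hua : u.count ltrA = w.count ltrA)
    (hmax : ∀ j < w.count ltrA, alphaH u j = max (alphaH w j) (alphaH v j)) (i : ℕ) :
    betaH u i = min (betaH w i) (betaH v i) := by
  refine eq_of_forall_lt_iff fun j ↦ ?_
  simp only [lt_min_iff, lt_betaH_iff, hua, hva]
  by_cases hj : j < w.count ltrA
  · simp [hj, hmax j hj]
  · simp [hj]

theorem gammaA_eq_image (w : List Bool) :
    gammaA w = (fun i : ℕ ↦ ((i : ℝ), (alphaH w i : ℝ))) '' Iio (w.count ltrA) := by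
  ext p
  simp [gammaA, eq_comm]

theorem gammaB_eq_image (w : List Bool) :
    gammaB w = (fun i : ℕ ↦ ((betaH w i : ℝ), (i : ℝ))) '' Iio (w.count ltrB) := by
  ext p
  simp [gammaB, eq_comm]

theorem convexHull_gammaA_gammaB_eq_of_forall_eq_or_eq
    (hca : v.count ltrA = w.count ltrA) (hcb : v.count ltrB = w.count ltrB)
    (hua : u.count ltrA = w.count ltrA) (hub : u.count ltrB = w.count ltrB)
    (hA : convexHull ℝ (gammaA w) = convexHull ℝ (gammaA v))
    (hB : convexHull ℝ (gammaB w) = convexHull ℝ (gammaB v))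
    (hα : ∀ i < w.count ltrA, alphaH u i = alphaH w i ∨ alphaH u i = alphaH v i)
    (hβ : ∀ i < w.count ltrB, betaH u i = betaH w i ∨ betaH u i = betaH v i) :
    convexHull ℝ (gammaA u) = convexHull ℝ (gammaA w) ∧
      convexHull ℝ (gammaB u) = convexHull ℝ (gammaB w) := by
  rw [gammaA_eq_image, gammaA_eq_image] at hA ⊢
  rw [gammaB_eq_image, gammaB_eq_image] at hB ⊢
  rw [hca] at hA
  rw [hcb] at hB
  rw [hua, hub]
  constructor
  · refine convexHull_image_eq_of_forall_eq_or_eq (e := fun i a : ℕ ↦ ((i : ℝ), (a : ℝ)))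
      (fun _ _ _ _ h ↦ ?_) (finite_Iio _) hA hα
    simpa using h
  · refine convexHull_image_eq_of_forall_eq_or_eq (e := fun i b : ℕ ↦ ((b : ℝ), (i : ℝ)))
      (fun _ _ _ _ h ↦ ?_) (finite_Iio _) hB hβ
    simpa [and_comm] using h

end Heights

/-- Structural Theorem, part (ii): if `w ∼_2 v` then the lattice meet and join
of their staircase paths again have the same pair of height polytopes. -/
theorem meet_join_sim2 (w v : List Bool)
    (hca : v.count ltrA = w.count ltrA) (hcb : v.count ltrB = w.count ltrB)
    (hA : convexHull ℝ (gammaA w) = convexHull ℝ (gammaA v))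
    (hB : convexHull ℝ (gammaB w) = convexHull ℝ (gammaB v)) :
    (∀ u : List Bool, u.count ltrA = w.count ltrA → u.count ltrB = w.count ltrB →
      (∀ i < w.count ltrA, alphaH u i = min (alphaH w i) (alphaH v i)) →
      convexHull ℝ (gammaA u) = convexHull ℝ (gammaA w) ∧
        convexHull ℝ (gammaB u) = convexHull ℝ (gammaB w)) ∧
    (∀ u : List Bool, u.count ltrA = w.count ltrA → u.count ltrB = w.count ltrB →
      (∀ i < w.count ltrA, alphaH u i = max (alphaH w i) (alphaH v i)) →
      convexHull ℝ (gammaA u) = convexHull ℝ (gammaA w) ∧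
        convexHull ℝ (gammaB u) = convexHull ℝ (gammaB w)) := by
  constructor
  · intro u hua hub hmin
    have hβ := betaH_eq_max_of_alphaH_eq_min hca hua hmin
    exact convexHull_gammaA_gammaB_eq_of_forall_eq_or_eq hca hcb hua hub hA hB
      (fun i hi ↦ hmin i hi ▸ min_choice _ _) (fun i _ ↦ hβ i ▸ max_choice _ _)
  · intro u hua hub hmax
    have hβ := betaH_eq_min_of_alphaH_eq_max hca hua hmax
    exact convexHull_gammaA_gammaB_eq_of_forall_eq_or_eq hca hcb hua hub hA hB
      (fun i hi ↦ hmax i hi ▸ max_choice _ _) (fun i _ ↦ hβ i ▸ min_choice _ _)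
end

section
/- For words w, v over {a,b} with content (ℓ_a, ℓ_b), the following are equivalent: (1) α^w_k ≤ α^v_k for all 0 ≤ k ≤ ℓ_a - 1; (2) β^w_k ≥ β^v_k for all 0 ≤ k ≤ ℓ_b - 1. -/
lemma alpha_le_countB (w : List Bool) (i : ℕ) : alphaH w i ≤ w.count ltrB := by
  induction w generalizing i with
  | nil => simp [alphaH]
  | cons x rest ih =>
    cases x
    · have : alphaH (false :: rest) i = alphaH rest i + 1 := by simp [alphaH, ltrA]
      rw [this]
      have : (false :: rest).count ltrB = rest.count ltrB + 1 := by
        simp [ltrB, List.count_cons]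
      rw [this]
      exact Nat.succ_le_succ (ih i)
    · have h1 : (true :: rest).count ltrB = rest.count ltrB := by
        simp [ltrB, List.count_cons]
      rw [h1]
      rcases Nat.eq_zero_or_pos i with rfl | hipos
      · simp [alphaH, ltrA]
      · have : alphaH (true :: rest) i = alphaH rest (i-1) := by
          simp [alphaH, ltrA, Nat.pos_iff_ne_zero.mp hipos]
        rw [this]; exact ih _

lemma count_map_not_B (w : List Bool) : (w.map (!·)).count ltrB = w.count ltrA := by
  induction w with
  | nil => simp
  | cons x rest ih =>
    simp only [ltrA, ltrB] at ih ⊢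
    cases x <;> simp [List.count_cons, ih]

lemma beta_le_countA (w : List Bool) (j : ℕ) : betaH w j ≤ w.count ltrA := by
  have h := alpha_le_countB (w.map (!·)) j
  rwa [count_map_not_B] at h

lemma key (w : List Bool) (i j : ℕ) (hi : i < w.count ltrA) (hj : j < w.count ltrB) :
    (alphaH w i ≤ j ↔ i < betaH w j) := by
  induction w generalizing i j with
  | nil => simp [ltrA, ltrB] at hi
  | cons x rest ih =>
    cases x with
    | true =>
      have hj' : j < rest.count ltrB := by simpa [ltrA, ltrB, List.count_cons] using hj
      have hbeta : betaH (true :: rest) j = betaH rest j + 1 := by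
        simp [betaH, alphaH, ltrA, ltrB]
      rcases Nat.eq_zero_or_pos i with rfl | hipos
      · have : alphaH (true :: rest) 0 = 0 := by simp [alphaH, ltrA]
        rw [this, hbeta]; omega
      · have hi' : i - 1 < rest.count ltrA := by
          have : i < rest.count ltrA + 1 := by
            simpa [ltrA, ltrB, List.count_cons] using hi
          omega
        have halpha : alphaH (true :: rest) i = alphaH rest (i-1) := by
          simp [alphaH, ltrA, Nat.pos_iff_ne_zero.mp hipos]
        have hIH := ih (i-1) j hi' hj'
        rw [halpha, hbeta]
        omega
    | false =>
      have hi' : i < rest.count ltrA := by simpa [ltrA, ltrB, List.count_cons] using hi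
      have halpha : alphaH (false :: rest) i = alphaH rest i + 1 := by
        simp [alphaH, ltrA]
      rcases Nat.eq_zero_or_pos j with rfl | hjpos
      · have : betaH (false :: rest) 0 = 0 := by simp [betaH, alphaH, ltrA]
        rw [this, halpha]; omega
      · have hj' : j - 1 < rest.count ltrB := by
          have : j < rest.count ltrB + 1 := by
            simpa [ltrA, ltrB, List.count_cons] using hj
          omega
        have hbeta : betaH (false :: rest) j = betaH rest (j-1) := by
          simp [betaH, alphaH, ltrA, Nat.pos_iff_ne_zero.mp hjpos]
        have hIH := ih i (j-1) hi' hj'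
        rw [halpha, hbeta]
        omega


/-- For words of the same content, the path of `v` rises no lower than that of `w`
(`α^w ≤ α^v` pointwise) iff `β^w ≥ β^v` pointwise. -/
theorem alpha_le_iff_beta_ge (w v : List Bool)
    (hca : v.count ltrA = w.count ltrA) (hcb : v.count ltrB = w.count ltrB) :
    (∀ k < w.count ltrA, alphaH w k ≤ alphaH v k) ↔
      (∀ k < w.count ltrB, betaH v k ≤ betaH w k) := by
  constructor
  · intro h j hj
    by_contra hc
    push_neg at hc
    set i := betaH w j with hidef
    have hvj : j < v.count ltrB := hcb ▸ hj
    have hiA : i < v.count ltrA := lt_of_lt_of_le hc (beta_le_countA v j)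
    have hiAw : i < w.count ltrA := hca ▸ hiA
    have h1 : alphaH v i ≤ j := (key v i j hiA hvj).mpr hc
    have h2 : ¬ alphaH w i ≤ j := by
      rw [key w i j hiAw hj]; omega
    exact h2 (le_trans (h i hiAw) h1)
  · intro h i hi
    by_contra hc
    push_neg at hc
    set j := alphaH v i with hjdef
    have hvA : i < v.count ltrA := hca ▸ hi
    have hjB : j < w.count ltrB := lt_of_lt_of_le hc (alpha_le_countB w i)
    have hjBv : j < v.count ltrB := hcb ▸ hjB
    have h1 : i < betaH v j := (key v i j hvA hjBv).mp le_rfl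
    have h2 : ¬ i < betaH w j := by
      rw [← key w i j hi hjB]; omega
    exact h2 (lt_of_lt_of_le h1 (h j hjB))
end

section
/- Let w be a word over alphabet Σ of the form w = w' a^k w'' where the letter a does not occur in w' and w'' does not start with a. If w ∼_n v for some n ≥ 2, then v = v' a^k v'' where v' has the same content as w' and v'' does not start with a. -/
/-!
Placing `[[α, β], [-∞, 0]]` in the top left corner of an otherwise `-∞` matrix embeds the
tropical affine maps `x ↦ max (α + x) β` into `UT_n` for `n ≥ 2`; the `(0, 1)` entry of a product
over a word is the maximum over positions `i` of `β` at `i` plus the sum of `α` over the letters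
before `i`. With `α a = -∞` and `β` equal to `0` at `a` and `-∞` elsewhere, only the first `a`
contributes, so the identity preserves the content of the prefix before the first `a`. Weighting
`a` by `1` and all other letters by a large negative `-M` makes the last `a` of the first block
the optimal position, which reads off the length of that block.
-/

section Words

open List

variable {σ : Type*}

/-- The `(0, 1)` entry of the tropical product of the matrices `[[A s, B s], [-∞, 0]]` over the
letters `s` of a word (`tProd_map_affineMatrix`). -/
noncomputable def affineFold (A B : σ → EReal) : List σ → EReal
  | [] => ⊥
  | s :: u => (A s + affineFold A B u) ⊔ B s

theorem affineFold_append (A B : σ → EReal) (x y : List σ) :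
    affineFold A B (x ++ y) = ((x.map A).sum + affineFold A B y) ⊔ affineFold A B x := by
  induction x with
  | nil => simp [affineFold]
  | cons s x ih =>
    simp only [cons_append, affineFold, ih, map_cons, sum_cons, add_max, add_assoc, sup_assoc]

theorem affineFold_eq_bot (A : σ → EReal) {B : σ → EReal} {u : List σ}
    (hB : ∀ s ∈ u, B s = ⊥) : affineFold A B u = ⊥ := by
  induction u with
  | nil => rfl
  | cons s u ih =>
    simp [affineFold, ih fun t ht => hB t (mem_cons_of_mem _ ht), hB s mem_cons_self]

theorem affineFold_le_length {A B : σ → EReal} (hA : ∀ s, A s ≤ 1) (hB : ∀ s, B s ≤ 0)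
    (u : List σ) : affineFold A B u ≤ u.length := by
  induction u with
  | nil => exact bot_le
  | cons s u ih =>
    rw [affineFold, length_cons, Nat.cast_succ, add_comm]
    exact sup_le (add_le_add ih (hA s)) ((hB s).trans (by positivity))

theorem affineFold_replicate {A B : σ → EReal} {a : σ} (hA : A a = 1) (hB : B a = 0) (m : ℕ) :
    affineFold A B (replicate (m + 1) a) = m := by
  induction m with
  | zero => simp [affineFold, hA, hB]
  | succ m ih =>
    rw [replicate_succ, affineFold, ih, hA, hB, add_comm, Nat.cast_succ]
    exact sup_eq_left.2 (by positivity)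

theorem List.exists_eq_replicate_append_of_head?_ne (a : σ) (u : List σ) :
    ∃ m u'', u = replicate m a ++ u'' ∧ u''.head? ≠ some a := by
  induction u with
  | nil => exact ⟨0, [], rfl, by simp⟩
  | cons s u ih =>
    by_cases hs : s = a
    · obtain ⟨m, u'', rfl, hu''⟩ := ih
      exact ⟨m + 1, u'', by simp [hs, replicate_succ], hu''⟩
    · exact ⟨0, s :: u, rfl, by simpa using hs⟩

theorem List.exists_eq_append_replicate_append_of_mem {a : σ} {u : List σ} (h : a ∈ u) :
    ∃ u' m u'', u = u' ++ replicate (m + 1) a ++ u'' ∧ a ∉ u' ∧ u''.head? ≠ some a := by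
  induction u with
  | nil => simp at h
  | cons s u ih =>
    by_cases hs : s = a
    · obtain ⟨m, u'', rfl, hu''⟩ := exists_eq_replicate_append_of_head?_ne a u
      exact ⟨[], m, u'', by simp [hs, replicate_succ], not_mem_nil, hu''⟩
    · obtain ⟨u', m, u'', rfl, hu', hu''⟩ := ih ((mem_cons.1 h).resolve_left (Ne.symm hs))
      exact ⟨s :: u', m, u'', rfl, by simp [hu', Ne.symm hs], hu''⟩

end Words

section Matrix

variable {σ : Type*} {n : ℕ} {i₀ i₁ : Fin n}

noncomputable def affineMatrix (α β : EReal) : Matrix (Fin n) (Fin n) EReal := fun i j =>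
  if (i : ℕ) = 0 ∧ (j : ℕ) = 0 then α
  else if (i : ℕ) = 0 ∧ (j : ℕ) = 1 then β
  else if (i : ℕ) = 1 ∧ (j : ℕ) = 1 then 0
  else ⊥

theorem isUT_affineMatrix (α β : EReal) : IsUT (affineMatrix (n := n) α β) := by
  intro i j hji
  have : (j : ℕ) < i := hji
  simp only [affineMatrix]
  split_ifs <;> first | rfl | omega

theorem tmul_affineMatrix_apply (h₀ : (i₀ : ℕ) = 0) (h₁ : (i₁ : ℕ) = 1) (α β : EReal)
    (P : Matrix (Fin n) (Fin n) EReal) (i j : Fin n) :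
    tmul (affineMatrix α β) P i j =
      (affineMatrix α β i i₀ + P i₀ j) ⊔ (affineMatrix α β i i₁ + P i₁ j) := by
  refine le_antisymm (iSup_le fun k => ?_)
    (sup_le (le_iSup (fun k => affineMatrix α β i k + P k j) i₀)
      (le_iSup (fun k => affineMatrix α β i k + P k j) i₁))
  by_cases hk₀ : k = i₀
  · exact hk₀ ▸ le_sup_left
  by_cases hk₁ : k = i₁
  · exact hk₁ ▸ le_sup_right
  have : affineMatrix (n := n) α β i k = ⊥ := by
    simp only [affineMatrix, ← h₀, ← h₁, Fin.val_inj, hk₀, hk₁]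
    simp
  simp [this]

theorem tProd_map_affineMatrix (h₀ : (i₀ : ℕ) = 0) (h₁ : (i₁ : ℕ) = 1) (A B : σ → EReal)
    (u : List σ) :
    tProd (u.map fun s => affineMatrix (A s) (B s)) i₀ i₁ = affineFold A B u ∧
      tProd (u.map fun s => affineMatrix (A s) (B s)) i₁ i₁ = 0 ∧
      tProd (u.map fun s => affineMatrix (A s) (B s)) i₁ i₀ = ⊥ := by
  have h₀₁ : i₀ ≠ i₁ := fun h => by simp [h, h₁] at h₀
  induction u with
  | nil => simp [tProd, tOne, affineFold, h₀₁, h₀₁.symm]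
  | cons s u ih =>
    obtain ⟨h01, h11, h10⟩ := ih
    simp only [tProd, List.map_cons, List.foldr_cons] at *
    refine ⟨?_, ?_, ?_⟩ <;> rw [tmul_affineMatrix_apply h₀ h₁] <;>
      simp [affineMatrix, h₀, h₁, h01, h11, h10, affineFold]

theorem UTId.affineFold_eq (hn : 2 ≤ n) {w v : List σ} (h : UTId n w v) (A B : σ → EReal) :
    affineFold A B w = affineFold A B v := by
  have h₀ : ((⟨0, by omega⟩ : Fin n) : ℕ) = 0 := rfl
  have h₁ : ((⟨1, by omega⟩ : Fin n) : ℕ) = 1 := rfl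
  rw [← (tProd_map_affineMatrix h₀ h₁ A B w).1, ← (tProd_map_affineMatrix h₀ h₁ A B v).1,
    h _ fun s => isUT_affineMatrix _ _]

end Matrix

section Letter

open List

variable {σ : Type*} [DecidableEq σ] (a : σ)

theorem affineFold_append_cons {A : σ → EReal} (hA : A a = ⊥) {u : List σ} (hu : a ∉ u)
    (t : List σ) :
    affineFold A (fun s => if s = a then 0 else ⊥) (u ++ a :: t) = (u.map A).sum := by
  rw [affineFold_append, affineFold_eq_bot _ fun s hs => if_neg (ne_of_mem_of_not_mem hs hu)]
  simp [affineFold, hA]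

theorem sum_map_indicator_eq_count {u : List σ} (hu : a ∉ u) (s : σ) :
    (u.map fun t => if t = a then ⊥ else if t = s then (1 : EReal) else 0).sum = u.count s := by
  induction u with
  | nil => simp
  | cons b u ih =>
    rw [map_cons, sum_cons, ih (fun h => hu (mem_cons_of_mem _ h)),
      if_neg (ne_of_mem_of_not_mem mem_cons_self hu), count_cons]
    split_ifs <;> simp_all [add_comm]

theorem affineFold_append_replicate_append (M : ℝ) {u' u'' : List σ} (hu' : a ∉ u')
    (hu'' : u''.head? ≠ some a) (hM : u''.length ≤ M) (m : ℕ) :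
    affineFold (fun s => if s = a then 1 else ((-M : ℝ) : EReal))
      (fun s => if s = a then (0 : EReal) else ⊥) (u' ++ replicate (m + 1) a ++ u'') =
      ((m - M * u'.length : ℝ) : EReal) := by
  set A : σ → EReal := fun s => if s = a then 1 else ((-M : ℝ) : EReal)
  set B : σ → EReal := fun s => if s = a then 0 else ⊥
  have hAa : A a = 1 := if_pos rfl
  have hrun : affineFold A B (replicate (m + 1) a ++ u'') = m := by
    rw [affineFold_append, affineFold_replicate hAa (if_pos rfl)]
    refine sup_eq_right.2 ?_
    rw [map_replicate, sum_replicate, hAa, nsmul_one]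
    rcases u'' with _ | ⟨b, t⟩
    · simp [affineFold]
    have hb : b ≠ a := fun hba => hu'' (by simp [hba])
    have hM' : (t.length : ℝ) + 1 ≤ M := by simpa using hM
    have hA : ∀ s, A s ≤ 1 := fun s => by
      unfold A; split_ifs
      exacts [le_rfl, EReal.coe_le_coe_iff.2 (by linarith)]
    have hB : ∀ s, B s ≤ 0 := fun s => by unfold B; split_ifs <;> simp
    calc ((m + 1 : ℕ) : EReal) + affineFold A B (b :: t)
        ≤ (((m + 1 : ℝ) + (-M + t.length) : ℝ) : EReal) := by
          rw [affineFold, show A b = ((-M : ℝ) : EReal) from if_neg hb,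
            show B b = ⊥ from if_neg hb, sup_bot_eq, EReal.coe_add, EReal.coe_add]
          exact add_le_add (by norm_cast) (add_le_add le_rfl (affineFold_le_length hA hB t))
      _ ≤ m := EReal.coe_le_coe_iff.2 (by linarith)
  have hprefix : (u'.map A).sum = ((-M * u'.length : ℝ) : EReal) := by
    rw [map_congr_left fun s hs => if_neg (ne_of_mem_of_not_mem hs hu'), map_const',
      sum_replicate, ← EReal.coe_nsmul, nsmul_eq_mul, mul_comm]
  rw [append_assoc, affineFold_append, hrun,
    affineFold_eq_bot _ fun s hs => if_neg (ne_of_mem_of_not_mem hs hu'), hprefix, sup_bot_eq,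
    ← EReal.coe_natCast, ← EReal.coe_add]
  ring_nf

end Letter

theorem utId_first_block_general {σ : Type*} [DecidableEq σ] (n : ℕ) (hn : 2 ≤ n)
    (a : σ) (k : ℕ) (hk : 0 < k) (w' w'' : List σ)
    (hw' : a ∉ w') (hw'' : w''.head? ≠ some a)
    (v : List σ)
    (h : UTId n (w' ++ List.replicate k a ++ w'') v) :
    ∃ v' v'' : List σ, v = v' ++ List.replicate k a ++ v'' ∧
      (∀ s : σ, v'.count s = w'.count s) ∧ v''.head? ≠ some a := by
  obtain ⟨k, rfl⟩ := Nat.exists_eq_add_one.2 hk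
  have hw : w' ++ List.replicate (k + 1) a ++ w'' = w' ++ a :: (List.replicate k a ++ w'') := by
    simp [List.replicate_succ]
  have hprefix (s : σ) : (w'.count s : EReal) = affineFold
      (fun t => if t = a then ⊥ else if t = s then 1 else 0) (fun t => if t = a then 0 else ⊥) v := by
    rw [← h.affineFold_eq hn, hw, affineFold_append_cons a (if_pos rfl) hw',
      sum_map_indicator_eq_count a hw']
  have hav : a ∈ v := by
    by_contra hav
    have := hprefix a
    rw [affineFold_eq_bot _ fun s hs => if_neg (ne_of_mem_of_not_mem hs hav)] at this
    exact EReal.natCast_ne_bot _ this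
  obtain ⟨v', m, v'', rfl, hv', hv''⟩ := List.exists_eq_append_replicate_append_of_mem hav
  have hcount (s : σ) : v'.count s = w'.count s := by
    have := hprefix s
    rw [List.append_assoc, List.replicate_succ, List.cons_append,
      affineFold_append_cons a (if_pos rfl) hv', sum_map_indicator_eq_count a hv'] at this
    exact_mod_cast this.symm
  have hlen : v'.length = w'.length := (List.perm_iff_count.2 hcount).length_eq
  set M : ℝ := w''.length + v''.length
  have hblock := h.affineFold_eq hn (fun s => if s = a then 1 else ((-M : ℝ) : EReal))
    (fun s => if s = a then 0 else ⊥)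
  rw [affineFold_append_replicate_append a M hw' hw'' (by simp [M]) k,
    affineFold_append_replicate_append a M hv' hv'' (by simp [M]) m, hlen] at hblock
  have hkm : k = m := by exact_mod_cast sub_left_inj.1 (EReal.coe_eq_coe_iff.1 hblock)
  exact ⟨v', v'', by rw [hkm], hcount, hv''⟩

/-- If `w = w' a^k w''` with no `a` in `w'` and `w''` not starting with `a`, and
`w ∼_n v`, then `v = v' a^k v''` with `c(v') = c(w')` and `v''` not starting with `a`. -/
theorem utId_first_block {σ : Type*} [Fintype σ] [DecidableEq σ] (n : ℕ) (hn : 2 ≤ n)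
    (a : σ) (k : ℕ) (hk : 0 < k) (w' w'' : List σ)
    (hw' : a ∉ w') (hw'' : w''.head? ≠ some a)
    (v : List σ) (hv : v ≠ [])
    (h : UTId n (w' ++ List.replicate k a ++ w'') v) :
    ∃ v' v'' : List σ, v = v' ++ List.replicate k a ++ v'' ∧
      (∀ s : σ, v'.count s = w'.count s) ∧ v''.head? ≠ some a :=
  utId_first_block_general n hn a k hk w' w'' hw' hw'' v h
end

section
/- Every word w over the two-letter alphabet {a, b} with at most five blocks in total is an isoterm for UT_2: w ∼_2 v implies v = w. -/
/-- The list of blocks (maximal runs) of `w`, each represented by its letter. -/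
def blockList {σ : Type*} [DecidableEq σ] (w : List σ) : List σ :=
  w.destutter (· ≠ ·)

/-!
Evaluating at the upper triangular tropical matrices `a ↦ !![α, ⊥; ⊥, 0]`,
`b ↦ !![β, 0; ⊥, 0]` shows that `UT_2`-equivalent words have the same content and the same
support function `(α, β) ↦ maxᵢ (α γᵢ + β i)` of their b-heights `γ`. After swapping the letters
if necessary, `w` has at most two b-blocks, so its heights are `g^m h^k` with `g ≤ h`. The
heights `γ'` of `v` are nondecreasing of the same length `m + k`, and the directions `(±1, 0)`
confine them to `[g, h]`. Then the direction `(m + k, -1)` at the point `(h, m)` forces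
`γ'ᵢ = h` for some `i ≤ m`, and `(-(m + k), 1)` at `(g, m - 1)` forces `γ'ᵢ = g` for some
`i ≥ m - 1`, so `γ' = γ`. Finally, a word is determined by its b-heights and its number of a's.
-/

/-- `supportFn α β L = maxᵢ (α * L[i] + β * i)`, the support function of the points `(L[i], i)`
in direction `(α, β)`; it is `⊥` for `L = []`. -/
noncomputable def supportFn (α β : ℝ) : List ℕ → EReal
  | [] => ⊥
  | x :: L => ↑(α * x) ⊔ (↑β + supportFn α β L)

theorem supportFn_map_add_one (α β : ℝ) (L : List ℕ) :
    supportFn α β (L.map (· + 1)) = ↑α + supportFn α β L := by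
  induction L with
  | nil => simp [supportFn]
  | cons x L ih =>
    rw [List.map_cons, supportFn, supportFn, ih, add_max, add_left_comm, ← EReal.coe_add]
    congr 2
    push_cast
    ring

theorem coe_le_supportFn (α β : ℝ) {L : List ℕ} {i : ℕ} (hi : i < L.length) :
    ((α * L[i] + β * i : ℝ) : EReal) ≤ supportFn α β L := by
  induction L generalizing i with
  | nil => simp at hi
  | cons x L ih =>
    rcases i with _ | i
    · simp [supportFn]
    · have hi' : i < L.length := by simpa using hi
      refine le_sup_of_le_right (le_trans (le_of_eq ?_) (add_le_add_right (ih hi') (β : EReal)))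
      rw [← EReal.coe_add, EReal.coe_eq_coe_iff, List.getElem_cons_succ]
      push_cast
      ring

theorem exists_eq_supportFn (α β : ℝ) {L : List ℕ} (hL : L ≠ []) :
    ∃ i, ∃ hi : i < L.length, supportFn α β L = ((α * L[i] + β * i : ℝ) : EReal) := by
  induction L with
  | nil => exact absurd rfl hL
  | cons x L ih =>
    by_cases hnil : L = []
    · subst hnil
      exact ⟨0, by simp, by simp [supportFn]⟩
    obtain ⟨i, hi, hS⟩ := ih hnil
    rcases le_total (↑(α * x) : EReal) (↑β + supportFn α β L) with h | h
    · refine ⟨i + 1, by simpa using hi, ?_⟩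
      rw [supportFn, sup_eq_right.2 h, hS, ← EReal.coe_add, EReal.coe_eq_coe_iff,
        List.getElem_cons_succ]
      push_cast
      ring
    · exact ⟨0, by simp, by rw [supportFn, sup_eq_left.2 h]; simp⟩

theorem exists_le_of_supportFn_le {α β : ℝ} {L L' : List ℕ}
    (hle : supportFn α β L ≤ supportFn α β L') {i : ℕ} (hi : i < L.length) :
    ∃ j, ∃ hj : j < L'.length, α * L[i] + β * i ≤ α * L'[j] + β * j := by
  have hpt := (coe_le_supportFn α β hi).trans hle
  have hne : L' ≠ [] := by
    rintro rfl
    exact EReal.coe_ne_bot _ (le_bot_iff.1 hpt)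
  obtain ⟨j, hj, hS⟩ := exists_eq_supportFn α β hne
  exact ⟨j, hj, EReal.coe_le_coe_iff.1 (hS ▸ hpt)⟩

/-- For each `true` in `w`, the number of `false`s before it: the b-heights `γ^{w,b}` of the
staircase path, with `a = false` and `b = true`. -/
def heights : List Bool → List ℕ
  | [] => []
  | false :: w => (heights w).map (· + 1)
  | true :: w => 0 :: heights w

@[simp]
theorem length_heights (w : List Bool) : (heights w).length = w.count true := by
  induction w with
  | nil => rfl
  | cons b w ih => cases b <;> simp [heights, ih]

theorem sortedLE_heights (w : List Bool) : (heights w).SortedLE := by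
  refine List.Pairwise.sortedLE ?_
  induction w with
  | nil => exact .nil
  | cons b w ih =>
    cases b
    · exact List.pairwise_map.2 (ih.imp Nat.succ_le_succ)
    · exact List.pairwise_cons.2 ⟨fun _ _ => Nat.zero_le _, ih⟩

theorem heights_append (w₁ w₂ : List Bool) :
    heights (w₁ ++ w₂) = heights w₁ ++ (heights w₂).map (· + w₁.count false) := by
  induction w₁ with
  | nil => simp [heights]
  | cons b w₁ ih =>
    cases b
    · simp [heights, ih, Function.comp_def, add_assoc]
    · simp [heights, ih]

@[simp]
theorem heights_replicate_false (n : ℕ) : heights (List.replicate n false) = [] := by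
  induction n with
  | zero => rfl
  | succ n ih => simp [List.replicate_succ, heights, ih]

@[simp]
theorem heights_replicate_true (n : ℕ) : heights (List.replicate n true) = List.replicate n 0 := by
  induction n with
  | zero => rfl
  | succ n ih => simp [List.replicate_succ, heights, ih]

theorem eq_nil_of_heights_eq_nil {w : List Bool} (h : heights w = []) (hf : w.count false = 0) :
    w = [] := by
  have ht : w.count true = 0 := by rw [← length_heights, h, List.length_nil]
  exact List.length_eq_zero_iff.1 (by rw [← List.count_true_add_count_false, ht, hf])

theorem eq_of_heights_eq {w v : List Bool} (h : heights w = heights v)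
    (hf : w.count false = v.count false) : w = v := by
  induction w generalizing v with
  | nil => exact (eq_nil_of_heights_eq_nil h.symm hf.symm).symm
  | cons b w ih =>
    rcases v with _ | ⟨c, v⟩
    · exact eq_nil_of_heights_eq_nil h hf
    cases b <;> cases c <;> simp only [heights, List.count_cons_self,
      List.count_cons_of_ne Bool.false_ne_true.symm, Nat.add_right_cancel_iff] at h hf
    · rw [ih (List.map_injective_iff.2 (add_left_injective 1) h) hf]
    · simp [List.map_eq_cons_iff] at h
    · exact absurd h.symm (by simp [List.map_eq_cons_iff])
    · rw [ih (List.cons_injective h) hf]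

theorem getElem_mem_Icc_of_supportFn_le {L₀ L : List ℕ} {g h : ℕ}
    (hL₀ : ∀ x ∈ L₀, x ∈ Set.Icc g h) (hS : ∀ α β, supportFn α β L ≤ supportFn α β L₀)
    {j : ℕ} (hj : j < L.length) : L[j] ∈ Set.Icc g h := by
  obtain ⟨i, hi, hup⟩ := exists_le_of_supportFn_le (hS 1 0) hj
  obtain ⟨i', hi', hlow⟩ := exists_le_of_supportFn_le (hS (-1) 0) hj
  have := hL₀ _ (List.getElem_mem hi)
  have := hL₀ _ (List.getElem_mem hi')
  simp only [one_mul, neg_one_mul, zero_mul, add_zero, neg_le_neg_iff, Nat.cast_le] at hup hlow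
  simp only [Set.mem_Icc] at *
  omega

theorem replicate_append_replicate_mem_Icc {m k g h : ℕ} (hgh : g ≤ h) :
    ∀ x ∈ List.replicate m g ++ List.replicate k h, x ∈ Set.Icc g h := by
  intro x hx
  rcases List.mem_append.1 hx with hx | hx <;> rw [List.eq_of_mem_replicate hx] <;> simpa

theorem getElem_eq_right_of_supportFn_eq {m k g h : ℕ} (hgh : g ≤ h) {L : List ℕ}
    (hlen : L.length = m + k) (hsort : L.SortedLE)
    (hS : ∀ α β, supportFn α β (List.replicate m g ++ List.replicate k h) = supportFn α β L)
    {j : ℕ} (hj : j < L.length) (hmj : m ≤ j) : L[j] = h := by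
  have hIcc {i} (hi : i < L.length) := getElem_mem_Icc_of_supportFn_le
    (replicate_append_replicate_mem_Icc hgh) (fun α β => (hS α β).ge) hi
  have hm : m < (List.replicate m g ++ List.replicate k h).length := by simp; omega
  obtain ⟨i, hi, hle⟩ := exists_le_of_supportFn_le (hS (m + k) (-1)).le hm
  rw [show (List.replicate m g ++ List.replicate k h)[m] = h by simp] at hle
  have hLi : L[i] = h := by
    refine le_antisymm (hIcc hi).2 (not_lt.1 fun hlt => ?_)
    have : (L[i] : ℝ) + 1 ≤ h := by exact_mod_cast hlt
    have : (m : ℝ) + 1 ≤ m + k := by exact_mod_cast (by omega : m + 1 ≤ m + k)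
    nlinarith [Nat.cast_nonneg (α := ℝ) i]
  have him : i ≤ m := by
    rw [hLi] at hle
    exact_mod_cast (by linarith : (i : ℝ) ≤ m)
  exact le_antisymm (hIcc hj).2 (hLi ▸ hsort.getElem_le_getElem_of_le (him.trans hmj))

theorem getElem_eq_left_of_supportFn_eq {m k g h : ℕ} (hgh : g ≤ h) {L : List ℕ}
    (hlen : L.length = m + k) (hsort : L.SortedLE)
    (hS : ∀ α β, supportFn α β (List.replicate m g ++ List.replicate k h) = supportFn α β L)
    {j : ℕ} (hj : j < L.length) (hjm : j < m) : L[j] = g := by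
  have hIcc {i} (hi : i < L.length) := getElem_mem_Icc_of_supportFn_le
    (replicate_append_replicate_mem_Icc hgh) (fun α β => (hS α β).ge) hi
  obtain ⟨n, rfl⟩ : ∃ n, m = n + 1 := ⟨m - 1, by omega⟩
  have hn : n < (List.replicate (n + 1) g ++ List.replicate k h).length := by simp; omega
  obtain ⟨i, hi, hle⟩ := exists_le_of_supportFn_le (hS (-(n + 1 + k)) 1).le hn
  rw [show (List.replicate (n + 1) g ++ List.replicate k h)[n] = g by
    simp [List.getElem_append_left]] at hle
  have hLi : L[i] = g := by
    refine le_antisymm (not_lt.1 fun hlt => ?_) (hIcc hi).1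
    have : (g : ℝ) + 1 ≤ L[i] := by exact_mod_cast hlt
    have : (i : ℝ) + 1 ≤ n + 1 + k := by exact_mod_cast (by omega : i + 1 ≤ n + 1 + k)
    nlinarith [Nat.cast_nonneg (α := ℝ) n]
  have hni : n ≤ i := by
    rw [hLi] at hle
    exact_mod_cast (by linarith : (n : ℝ) ≤ i)
  exact le_antisymm (hLi ▸ hsort.getElem_le_getElem_of_le (by omega)) (hIcc hj).1

theorem eq_replicate_append_replicate_of_supportFn_eq {m k g h : ℕ} (hgh : g ≤ h) {L : List ℕ}
    (hlen : L.length = m + k) (hsort : L.SortedLE)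
    (hS : ∀ α β, supportFn α β (List.replicate m g ++ List.replicate k h) = supportFn α β L) :
    L = List.replicate m g ++ List.replicate k h := by
  refine List.ext_getElem (by simp [hlen]) fun j hj _ => ?_
  by_cases hjm : j < m
  · rw [getElem_eq_left_of_supportFn_eq hgh hlen hsort hS hj hjm,
      List.getElem_append_left (by simpa using hjm), List.getElem_replicate]
  · rw [getElem_eq_right_of_supportFn_eq hgh hlen hsort hS hj (not_lt.1 hjm),
      List.getElem_append_right (by simpa using hjm), List.getElem_replicate]

noncomputable def mkUT (x c : EReal) : Matrix (Fin 2) (Fin 2) EReal := !![x, c; ⊥, 0]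

theorem iSup_fin_two {α : Type*} [CompleteLattice α] (f : Fin 2 → α) : ⨆ i, f i = f 0 ⊔ f 1 :=
  le_antisymm (iSup_le fun i => by fin_cases i; exacts [le_sup_left, le_sup_right])
    (sup_le (le_iSup f 0) (le_iSup f 1))

theorem tmul_mkUT (x₁ c₁ x₂ c₂ : EReal) :
    tmul (mkUT x₁ c₁) (mkUT x₂ c₂) = mkUT (x₁ + x₂) ((x₁ + c₂) ⊔ c₁) := by
  ext i j
  fin_cases i <;> fin_cases j <;> simp [tmul, mkUT, iSup_fin_two]

noncomputable def probe (α β : ℝ) (b : Bool) : Matrix (Fin 2) (Fin 2) EReal :=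
  if b then mkUT β 0 else mkUT α ⊥

theorem isUT_probe (α β : ℝ) (b : Bool) : IsUT (probe α β b) := by
  intro i j hij
  fin_cases i <;> fin_cases j <;> cases b <;> simp_all [probe, mkUT]

theorem tProd_map_probe (α β : ℝ) (w : List Bool) :
    tProd (w.map (probe α β)) =
      mkUT ↑(α * w.count false + β * w.count true) (supportFn α β (heights w)) := by
  induction w with
  | nil => ext i j; fin_cases i <;> fin_cases j <;> simp [tProd, tOne, mkUT, heights, supportFn]
  | cons b w ih =>
    change tmul (probe α β b) (tProd (w.map (probe α β))) = _
    rw [ih]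
    cases b
    · rw [probe, if_neg Bool.false_ne_true, tmul_mkUT, heights, supportFn_map_add_one, sup_bot_eq,
        ← EReal.coe_add]
      congr 2
      simp only [List.count_cons_self, List.count_cons_of_ne Bool.false_ne_true]
      push_cast
      ring
    · rw [probe, if_pos rfl, tmul_mkUT, heights, supportFn, ← EReal.coe_add, sup_comm]
      congr 2
      · simp only [List.count_cons_self, List.count_cons_of_ne Bool.false_ne_true.symm]
        push_cast
        ring
      · simp

namespace UTId

variable {w v : List Bool}

theorem mkUT_eq (h : UTId 2 w v) (α β : ℝ) :
    mkUT ↑(α * w.count false + β * w.count true) (supportFn α β (heights w)) =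
      mkUT ↑(α * v.count false + β * v.count true) (supportFn α β (heights v)) := by
  simpa only [tProd_map_probe] using h (probe α β) (isUT_probe α β)

theorem count_eq (h : UTId 2 w v) (b : Bool) : w.count b = v.count b := by
  have key (α β : ℝ) :
      α * w.count false + β * w.count true = α * v.count false + β * v.count true :=
    EReal.coe_injective (congrFun (congrFun (h.mkUT_eq α β) 0) 0)
  cases b
  · exact_mod_cast by simpa using key 1 0
  · exact_mod_cast by simpa using key 0 1

theorem supportFn_heights_eq (h : UTId 2 w v) (α β : ℝ) :
    supportFn α β (heights w) = supportFn α β (heights v) :=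
  congrFun (congrFun (h.mkUT_eq α β) 0) 1

theorem map {σ τ : Type*} {n : ℕ} {w v : List σ} (h : UTId n w v) (f : σ → τ) :
    UTId n (w.map f) (v.map f) := by
  intro φ hφ
  simpa [List.map_map] using h (φ ∘ f) (fun s => hφ (f s))

end UTId

/-- `RunForm n w` says `w = a^{p₁} b^{m₁} ⋯ a^{pₙ} b^{mₙ} a^s`. -/
def RunForm : ℕ → List Bool → Prop
  | 0, w => ∃ s, w = List.replicate s false
  | n + 1, w => ∃ p m u, RunForm n u ∧ w = List.replicate p false ++ List.replicate m true ++ u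

theorem runForm_nil : ∀ n, RunForm n []
  | 0 => ⟨0, rfl⟩
  | n + 1 => ⟨0, 0, [], runForm_nil n, rfl⟩

theorem RunForm.cons_false : ∀ {n : ℕ} {w : List Bool}, RunForm n w → RunForm n (false :: w)
  | 0, _, ⟨s, hs⟩ => ⟨s + 1, by rw [hs, List.replicate_succ]⟩
  | _ + 1, _, ⟨p, m, u, hu, hw⟩ => ⟨p + 1, m, u, hu, by rw [hw, List.replicate_succ]; rfl⟩

theorem blockList_cons_cons_self {σ : Type*} [DecidableEq σ] (x : σ) (w : List σ) :
    blockList (x :: x :: w) = blockList (x :: w) := by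
  rw [blockList, List.destutter_cons_cons, if_neg (not_not.2 rfl), ← List.destutter_cons']
  rfl

theorem blockList_cons_cons_of_ne {σ : Type*} [DecidableEq σ] {x y : σ} (h : x ≠ y)
    (w : List σ) : blockList (x :: y :: w) = x :: blockList (y :: w) := by
  rw [blockList, List.destutter_cons_cons, if_pos h]
  rfl

theorem count_blockList_le_cons {σ : Type*} [DecidableEq σ] (a x : σ) (w : List σ) :
    (blockList w).count a ≤ (blockList (x :: w)).count a := by
  rcases w with _ | ⟨y, w⟩
  · simp [blockList]
  by_cases hxy : x = y
  · rw [hxy, blockList_cons_cons_self]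
  · rw [blockList_cons_cons_of_ne hxy]
    exact List.count_le_count_cons

theorem runForm_of_count_blockList_le {w : List Bool} {n : ℕ}
    (h : (blockList w).count true ≤ n) : RunForm n w := by
  induction w generalizing n with
  | nil => exact runForm_nil n
  | cons b w ih =>
    have hw := ih ((count_blockList_le_cons true b w).trans h)
    cases b
    · exact hw.cons_false
    rcases n with _ | n
    · have : true ∈ blockList (true :: w) := List.mem_destutter' _ _ _
      exact absurd (List.count_pos_iff.2 this) (by omega)
    obtain ⟨p, m, u, hu, rfl⟩ := hw
    rcases p with _ | p
    · exact ⟨0, m + 1, u, hu, by simp [List.replicate_succ]⟩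
    · rw [List.replicate_succ, List.cons_append, List.cons_append,
        blockList_cons_cons_of_ne Bool.false_ne_true.symm, List.count_cons_self, ← List.cons_append,
        ← List.cons_append, ← List.replicate_succ] at h
      exact ⟨0, 1, _, ih (by omega), rfl⟩

theorem blockList_map {σ τ : Type*} [DecidableEq σ] [DecidableEq τ] {f : σ → τ}
    (hf : Function.Injective f) (w : List σ) : blockList (w.map f) = (blockList w).map f :=
  (List.map_destutter_ne w hf).symm

theorem UTId.eq_of_count_blockList_le_two {w v : List Bool} (h : UTId 2 w v)
    (hw : (blockList w).count true ≤ 2) : v = w := by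
  obtain ⟨p, m, _, ⟨r, k, _, ⟨s, rfl⟩, rfl⟩, rfl⟩ := runForm_of_count_blockList_le hw
  set w := List.replicate p false ++ List.replicate m true ++
    (List.replicate r false ++ List.replicate k true ++ List.replicate s false)
  have hH : heights w = List.replicate m p ++ List.replicate k (p + r) := by
    simp [w, heights_append, List.map_replicate, List.count_replicate, add_comm]
  have hHv : heights v = heights w := by
    rw [hH]
    refine eq_replicate_append_replicate_of_supportFn_eq (Nat.le_add_right p r) ?_
      (sortedLE_heights v) fun α β => hH ▸ h.supportFn_heights_eq α β
    rw [length_heights, ← h.count_eq, ← length_heights, hH, List.length_append,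
      List.length_replicate, List.length_replicate]
  exact eq_of_heights_eq hHv (h.count_eq false).symm

theorem isoterm_of_le_five_blocks_general (w : List Bool)
    (hblocks : (blockList w).length ≤ 5)
    (v : List Bool) (h : UTId 2 w v) : v = w := by
  have hcount := List.count_true_add_count_false (blockList w)
  by_cases ht : (blockList w).count true ≤ 2
  · exact h.eq_of_count_blockList_le_two ht
  · have hnot : (blockList (w.map not)).count true ≤ 2 := by
      rw [blockList_map Bool.not_injective, ← Bool.not_false,
        List.count_map_of_injective _ _ Bool.not_injective]
      omega
    exact List.map_injective_iff.2 Bool.not_injective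
      ((h.map not).eq_of_count_blockList_le_two hnot)

/-- A word over a two-letter alphabet with at most five blocks is an isoterm for `UT_2`. -/
theorem isoterm_of_le_five_blocks (w : List Bool) (hw : w ≠ [])
    (hblocks : (blockList w).length ≤ 5)
    (v : List Bool) (hv : v ≠ []) (h : UTId 2 w v) : v = w :=
  isoterm_of_le_five_blocks_general w hblocks v h
end

section
/- Define the affine map T: ℝ^m → ℝ^m by T(p) = -p + c(w) - e_i, where c(w) is the content of word w and e_i the i-th standard basis vector. Then T maps the a_i-height of w bijectively onto the a_i-height of the reversed word rev(w): T(γ^{w,a_i}) = γ^{rev(w),a_i}. -/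
/-- The `a_i`-height of the staircase path of `w`, realised in `ℝ^m`: the set of
contents of prefixes of `w` ending immediately before an occurrence of `i`. -/
def heightSet {m : ℕ} (w : List (Fin m)) (i : Fin m) : Set (Fin m → ℝ) :=
  {p | ∃ h : Fin w.length, w.get h = i ∧ p = fun s => ((w.take h).count s : ℝ)}

lemma take_reverse_eq {α : Type*} (w : List α) (h : ℕ) (hh : h < w.length) :
    w.reverse.take (w.length - 1 - h) = (w.drop (h + 1)).reverse := by
  have hrev : w.reverse = (w.drop (h + 1)).reverse ++ (w.take (h + 1)).reverse := by
    rw [← List.reverse_append, List.take_append_drop]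
  rw [hrev, List.take_left']
  rw [List.length_reverse, List.length_drop]
  omega

lemma count_key {m : ℕ} (w : List (Fin m)) (h : ℕ) (hh : h < w.length) (s : Fin m) :
    (w.take h).count s + (if w[h] = s then 1 else 0) + (w.drop (h + 1)).count s
      = w.count s := by
  conv_rhs => rw [← List.take_append_drop h w]
  rw [List.count_append, List.drop_eq_getElem_cons hh, List.count_cons]
  simp only [beq_iff_eq]
  omega

lemma height_sub {m : ℕ} (w : List (Fin m)) (i : Fin m) :
    (fun p : Fin m → ℝ =>
        -p + (fun s => (w.count s : ℝ)) - fun s => if s = i then 1 else 0) ''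
      heightSet w i ⊆ heightSet w.reverse i := by
  rintro _ ⟨p, ⟨h, hi, rfl⟩, rfl⟩
  have hh : (h : ℕ) < w.length := h.isLt
  have hlt : w.length - 1 - (h : ℕ) < w.reverse.length := by
    rw [List.length_reverse]; omega
  refine ⟨⟨w.length - 1 - h, hlt⟩, ?_, ?_⟩
  · rw [List.get_reverse' w ⟨w.length - 1 - h, hlt⟩
      (by simp only []; omega)]
    have : w.length - 1 - (w.length - 1 - (h : ℕ)) = (h : ℕ) := by omega
    convert hi using 2
    exact Fin.ext this
  · funext s
    have hw : w[(h : ℕ)] = w.get h := rfl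
    have hnat := count_key w h hh s
    rw [hw, hi] at hnat
    simp only [Pi.add_apply, Pi.sub_apply, Pi.neg_apply]
    rw [take_reverse_eq w h hh, List.count_reverse]
    have hcast := congrArg (Nat.cast : ℕ → ℝ) hnat
    by_cases hs : s = i
    · rw [if_pos hs.symm] at hcast
      push_cast at hcast
      rw [if_pos hs]
      linarith
    · rw [if_neg (fun he => hs he.symm)] at hcast
      push_cast at hcast
      rw [if_neg hs]
      linarith

/-- The affine map `T(p) = -p + c(w) - e_i` maps the `a_i`-height of `w` onto the
`a_i`-height of the reversed word. -/
theorem height_reverse {m : ℕ} (w : List (Fin m)) (i : Fin m) :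
    (fun p : Fin m → ℝ =>
        -p + (fun s => (w.count s : ℝ)) - fun s => if s = i then 1 else 0) ''
      heightSet w i = heightSet w.reverse i := by
  apply Set.Subset.antisymm (height_sub w i)
  intro q hq
  have h2 := height_sub w.reverse i
  rw [List.reverse_reverse] at h2
  have hc : (fun s => ((w.reverse.count s : ℕ) : ℝ)) = fun s => ((w.count s : ℕ) : ℝ) := by
    funext s; rw [List.count_reverse]
  have hTq : (-q + (fun s => (w.count s : ℝ)) - fun s => if s = i then 1 else 0)
      ∈ heightSet w i := by
    apply h2
    refine ⟨q, hq, ?_⟩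
    rw [← hc]
  refine ⟨_, hTq, ?_⟩
  funext s
  simp only [Pi.add_apply, Pi.sub_apply, Pi.neg_apply]
  ring
end

section
/- Let w be a word over alphabet Σ and u a scattered subword of w of length d, and let a_j ∈ Σ. Then the support set γ^{u a_j} ⊆ ℕ^{m(d+1)} of the polynomial g_{u a_j}^w is the image under an invertible affine linear map of the set (γ^u × γ^{a_j}) ∩ C_u, where C_u = {y ∈ ℝ^{m(d+1)} : Σ_{k=0}^{d-1} y_{mk+r} + |u|_{a_r} ≤ y_{md+r} for 1 ≤ r ≤ m}. Explicitly, the map Π(p) whose first md coordinates equal those of p and whose (md+r)-th coordinate equals Σ_{k=0}^{d} p_{km+r} + |u|_{a_r} satisfies Π(γ^{u a_j}) = (γ^u × γ^{a_j}) ∩ C_u. -/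
/-- The support set `γ^u ⊆ ℕ^{m·d}` of the polynomial `g_u^w`: for each
factorisation `w = i(0) u_1 i(1) ⋯ i(d-1) u_d w'` exhibiting `u` as a scattered
subword of `w`, record the content of each intermediary factor `i(k)`. -/
def gammaSub {m : ℕ} (w : List (Fin m)) {d : ℕ} (u : Fin d → Fin m) :
    Set (Fin d → Fin m → ℕ) :=
  {p | ∃ (f : Fin d → List (Fin m)) (w' : List (Fin m)),
    w = ((List.finRange d).flatMap fun k => f k ++ [u k]) ++ w' ∧
    ∀ k r, p k r = (f k).count r}

/-- The number of occurrences `|u|_{a_r}` of the letter `r` in `u`. -/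
def uCount {m d : ℕ} (u : Fin d → Fin m) (r : Fin m) : ℕ :=
  (Finset.univ.filter fun k => u k = r).card

/-- The invertible affine map `Π`: keep the first `d` blocks of coordinates and
replace the last block by `r ↦ Σ_k p_{k,r} + |u|_{a_r}`. -/
def PiMap {m d : ℕ} (u : Fin d → Fin m) (p : Fin (d + 1) → Fin m → ℕ) :
    Fin (d + 1) → Fin m → ℕ :=
  Fin.snoc (fun k : Fin d => p k.castSucc) (fun r => (∑ k, p k r) + uCount u r)

lemma count_flatMap_finRange {m d : ℕ} (F : Fin d → List (Fin m)) (r : Fin m) :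
    ((List.finRange d).flatMap F).count r = ∑ k, (F k).count r := by
  rw [List.count_flatMap, Fin.sum_univ_def]
  rfl

lemma flatMap_finRange_succ_last {α : Type*} {d : ℕ} (F : Fin (d + 1) → List α) :
    (List.finRange (d + 1)).flatMap F =
      ((List.finRange d).flatMap fun k => F k.castSucc) ++ F (Fin.last d) := by
  rw [List.finRange_succ_last, List.flatMap_append, List.flatMap_map]
  simp [Function.comp]

lemma uCount_eq_sum {m d : ℕ} (u : Fin d → Fin m) (r : Fin m) :
    uCount u r = ∑ k, if u k = r then 1 else 0 := by
  rw [uCount, Finset.card_filter]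

lemma count_prefix {m d : ℕ} (u : Fin d → Fin m) (f : Fin d → List (Fin m)) (r : Fin m) :
    ((List.finRange d).flatMap fun k => f k ++ [u k]).count r
      = (∑ k, (f k).count r) + uCount u r := by
  rw [count_flatMap_finRange, uCount_eq_sum, ← Finset.sum_add_distrib]
  congr 1; funext k
  simp [List.count_append, List.count_singleton', eq_comm]

lemma sum_count_eq_length {m : ℕ} (l : List (Fin m)) : ∑ r, l.count r = l.length := by
  classical
  simpa using Multiset.sum_count_eq_card (s := Finset.univ) (m := (l : Multiset (Fin m)))
    (fun a _ => Finset.mem_univ a)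

/-- `Π(γ^{u a_j}) = (γ^u × γ^{a_j}) ∩ C_u`. -/
theorem gammaSub_snoc {m : ℕ} (w : List (Fin m)) {d : ℕ} (u : Fin d → Fin m)
    (aj : Fin m) (hu : (gammaSub w u).Nonempty) :
    PiMap u '' gammaSub w (Fin.snoc u aj) =
      {y : Fin (d + 1) → Fin m → ℕ |
        (fun k : Fin d => y k.castSucc) ∈ gammaSub w u ∧
        (fun _ : Fin 1 => y (Fin.last d)) ∈ gammaSub w (fun _ : Fin 1 => aj) ∧
        ∀ r, (∑ k : Fin d, y k.castSucc r) + uCount u r ≤ y (Fin.last d) r} := by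
  ext y
  constructor
  · rintro ⟨p, ⟨f, w'', hw, hp⟩, rfl⟩
    have hcast : ∀ k : Fin d, ∀ r, PiMap u p k.castSucc r = p k.castSucc r := by
      intro k r; simp [PiMap]
    have hlast : ∀ r, PiMap u p (Fin.last d) r = (∑ k, p k r) + uCount u r := by
      intro r; simp [PiMap]
    have hwdec : w = (((List.finRange d).flatMap fun k => f k.castSucc ++ [u k])
        ++ f (Fin.last d)) ++ ([aj] ++ w'') := by
      rw [hw, flatMap_finRange_succ_last]
      simp [Fin.snoc_castSucc, Fin.snoc_last]
    have hPcount : ∀ r, ((((List.finRange d).flatMap fun k => f k.castSucc ++ [u k])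
        ++ f (Fin.last d)).count r) = (∑ k, p k r) + uCount u r := by
      intro r
      rw [List.count_append, count_prefix]
      rw [Fin.sum_univ_castSucc (f := fun k => p k r)]
      have := hp (Fin.last d) r
      have h2 : ∀ k : Fin d, p k.castSucc r = (f k.castSucc).count r :=
        fun k => hp k.castSucc r
      simp only [h2, this]
      ring
    refine ⟨⟨fun k => f k.castSucc, f (Fin.last d) ++ ([aj] ++ w''), by
        rw [hwdec]; simp, fun k r => (hcast k r).trans (hp k.castSucc r)⟩,
      ⟨fun _ => ((List.finRange d).flatMap fun k => f k.castSucc ++ [u k])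
          ++ f (Fin.last d), w'', by simpa [List.finRange] using hwdec,
        fun k r => (hlast r).trans (hPcount r).symm⟩, ?_⟩
    intro r
    rw [hlast]
    simp only [hcast]
    rw [Fin.sum_univ_castSucc (f := fun k => p k r)]
    omega
  · rintro ⟨⟨f, w', hw1, hp1⟩, ⟨g, w'', hw2, hp2⟩, hle⟩
    set P : List (Fin m) := (List.finRange d).flatMap fun k => f k ++ [u k] with hP
    have hg0 : w = g 0 ++ ([aj] ++ w'') := by
      simpa [List.finRange] using hw2
    have hy1 : ∀ k r, y (Fin.castSucc k) r = (f k).count r := fun k r => hp1 k r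
    have hy2 : ∀ r, y (Fin.last d) r = (g 0).count r := fun r => hp2 0 r
    have hPcount : ∀ r, P.count r = (∑ k : Fin d, y k.castSucc r) + uCount u r := by
      intro r
      rw [hP, count_prefix]
      congr 1
      exact Finset.sum_congr rfl fun k _ => (hy1 k r).symm
    have hcle : ∀ r, P.count r ≤ (g 0).count r := by
      intro r; rw [hPcount, ← hy2]; exact hle r
    have hlen : P.length ≤ (g 0).length := by
      rw [← sum_count_eq_length, ← sum_count_eq_length]
      exact Finset.sum_le_sum fun r _ => hcle r
    have hPpre : P <+: g 0 := by
      refine List.prefix_of_prefix_length_le ⟨w', hw1.symm⟩ ⟨[aj] ++ w'', hg0.symm⟩ hlen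
    obtain ⟨t, ht⟩ := hPpre
    refine ⟨Fin.snoc (fun k : Fin d => y k.castSucc) (fun r => t.count r),
      ⟨Fin.snoc f t, w'', ?_, ?_⟩, ?_⟩
    · rw [flatMap_finRange_succ_last]
      simp only [Fin.snoc_castSucc, Fin.snoc_last]
      rw [hg0, ← ht, hP]
      simp
    · intro k r
      refine Fin.lastCases ?_ ?_ k
      · simp [Fin.snoc_last]
      · intro i
        simp only [Fin.snoc_castSucc]
        exact hy1 i r
    · funext k r
      refine Fin.lastCases ?_ (fun i => ?_) k
      · simp only [PiMap, Fin.snoc_last]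
        rw [Fin.sum_univ_castSucc]
        simp only [Fin.snoc_castSucc, Fin.snoc_last]
        have : (g 0).count r = P.count r + t.count r := by
          rw [← ht, List.count_append]
        rw [hy2, this, hPcount]
        ring
      · simp [PiMap]
end

section
/- Let u, v, w be words over {a,b} of the same content such that u ∼_2 v where u = u' xy u'' and v = u' yx u'' differ by a single adjacent swap of distinct letters x ≠ y. Then neither of the two lattice points of ℕ² at which the paths of u and v differ is a vertex of the corresponding height polygon: writing α^u and α^v for the a-heights, there is exactly one index i with α^u_i ≠ α^v_i, |α^u_i - α^v_i| = 1, and neither (i, α^u_i) nor (i, α^v_i) is a vertex of conv(γ^{u,a}) = conv(γ^{v,a}); moreover 0 < i < ℓ_a - 1. -/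
/-! The swap changes the `a`-height only at the index `p = |u'|_a` of the swapped `a`, and there by
one. As the two polygons coincide, the point `(p, α^u_p)` lies in the polygon of `v`. If `p` were
the first or the last index, the vertical line `x = p` would support that polygon and meet it only
in `(p, α^v_p) ≠ (p, α^u_p)`. Neither differing point is a vertex, since the vertices of the common
polygon belong to both heights, and each height has a single point of abscissa `p`. -/

theorem mem_convexHull_sep_eq_of_forall_le {𝕜 E : Type*} [Field 𝕜] [LinearOrder 𝕜]
    [IsStrictOrderedRing 𝕜] [AddCommGroup E] [Module 𝕜 E] (f : E →ₗ[𝕜] 𝕜) {S : Set E} {m : 𝕜}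
    (hS : ∀ s ∈ S, m ≤ f s) {z : E} (hz : z ∈ convexHull 𝕜 S) (hfz : f z = m) :
    z ∈ convexHull 𝕜 {s ∈ S | f s = m} := by
  let T := {z | m ≤ f z ∧ (f z = m → z ∈ convexHull 𝕜 {s ∈ S | f s = m})}
  have hST : S ⊆ T := fun s hs => ⟨hS s hs, fun h => subset_convexHull 𝕜 _ ⟨hs, h⟩⟩
  have hT : Convex 𝕜 T := by
    rintro z₁ ⟨h₁, h₁'⟩ z₂ ⟨h₂, h₂'⟩ a b ha hb hab
    have hf : f (a • z₁ + b • z₂) - m = a * (f z₁ - m) + b * (f z₂ - m) := by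
      simp only [map_add, map_smul, smul_eq_mul]
      linear_combination m * hab
    have hpos₁ := mul_nonneg ha (sub_nonneg.2 h₁)
    have hpos₂ := mul_nonneg hb (sub_nonneg.2 h₂)
    refine ⟨by linarith, fun h => ?_⟩
    have hz₁ : a * (f z₁ - m) = 0 := by linarith
    have hz₂ : b * (f z₂ - m) = 0 := by linarith
    rcases mul_eq_zero.1 hz₁ with rfl | hm₁
    · obtain rfl : b = 1 := by linarith
      simpa using h₂' (by linarith)
    rcases mul_eq_zero.1 hz₂ with rfl | hm₂
    · obtain rfl : a = 1 := by linarith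
      simpa using h₁' (by linarith)
    exact convex_convexHull 𝕜 _ (h₁' (by linarith)) (h₂' (by linarith)) ha hb hab
  exact (convexHull_min hST hT hz).2 hfz

section Heights

variable {w : List Bool} {k : ℕ} {y : ℝ}

theorem mk_mem_gammaA (hk : k < w.count ltrA) : ((k : ℝ), (alphaH w k : ℝ)) ∈ gammaA w :=
  ⟨k, hk, rfl⟩

theorem eq_alphaH_of_mk_mem_gammaA (h : ((k : ℝ), y) ∈ gammaA w) : y = alphaH w k := by
  obtain ⟨i, -, hi⟩ := h
  obtain ⟨hki, rfl⟩ := Prod.mk.inj hi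
  rw [Nat.cast_inj.1 hki]

theorem eq_alphaH_of_mem_extremePoints
    (h : ((k : ℝ), y) ∈ (convexHull ℝ (gammaA w)).extremePoints ℝ) : y = alphaH w k :=
  eq_alphaH_of_mk_mem_gammaA (extremePoints_convexHull_subset h)

-- At the first and the last index the vertical line `x = k` supports the polygon.
theorem eq_alphaH_of_mem_convexHull_of_endpoint (hk : k = 0 ∨ k + 1 = w.count ltrA)
    (h : ((k : ℝ), y) ∈ convexHull ℝ (gammaA w)) : y = alphaH w k := by
  have hslice : ((k : ℝ), y) ∈ convexHull ℝ {s ∈ gammaA w | s.1 = k} := by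
    rcases hk with rfl | hk
    · refine mem_convexHull_sep_eq_of_forall_le (LinearMap.fst ℝ ℝ ℝ) ?_ h (by simp)
      rintro _ ⟨i, -, rfl⟩
      simp
    · have hle : ∀ s ∈ gammaA w, -(k : ℝ) ≤ (-LinearMap.fst ℝ ℝ ℝ) s := by
        rintro _ ⟨i, hi, rfl⟩
        simpa using (show i ≤ k by omega)
      refine convexHull_mono ?_ (mem_convexHull_sep_eq_of_forall_le _ hle h (by simp))
      rintro s ⟨hs, hsk⟩
      exact ⟨hs, by simpa using hsk⟩
  have hsub : {s ∈ gammaA w | s.1 = k} ⊆ {((k : ℝ), (alphaH w k : ℝ))} := by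
    rintro ⟨a, b⟩ ⟨hs, rfl : a = k⟩
    rw [Set.mem_singleton_iff, eq_alphaH_of_mk_mem_gammaA hs]
  have := convexHull_mono hsub hslice
  rw [convexHull_singleton, Set.mem_singleton_iff, Prod.mk.injEq] at this
  exact this.2

end Heights

section Swap

theorem alphaH_append_of_lt (t : List Bool) {u : List Bool} {k : ℕ} (hk : k < u.count ltrA) :
    alphaH (u ++ t) k = alphaH u k := by
  induction u generalizing k with
  | nil => simp at hk
  | cons z r ih =>
    cases z with
    | true =>
      rcases k with _ | k
      · simp [alphaH, ltrA]
      · simp [alphaH, ltrA, ih (k := k) (by simpa [ltrA] using hk)]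
    | false =>
      simp [alphaH, ltrA, ih (k := k) (by simpa [ltrA] using hk)]

theorem alphaH_append_of_le (t : List Bool) {u : List Bool} {k : ℕ} (hk : u.count ltrA ≤ k) :
    alphaH (u ++ t) k = u.count ltrB + alphaH t (k - u.count ltrA) := by
  induction u generalizing k with
  | nil => simp
  | cons z r ih =>
    cases z with
    | true =>
      rcases k with _ | k
      · simp [ltrA] at hk
      simp [alphaH, ltrA, ltrB, ih (k := k) (by simpa [ltrA] using hk)]
    | false =>
      simp [alphaH, ltrA, ltrB, ih (k := k) (by simpa [ltrA] using hk)]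
      omega

theorem alphaH_cons_cons_comm (x y : Bool) (t : List Bool) {m : ℕ} (hm : m ≠ 0) :
    alphaH (x :: y :: t) m = alphaH (y :: x :: t) m := by
  cases x <;> cases y <;> simp [alphaH, ltrA, hm]

variable (u' u'' : List Bool) {x y : Bool}

theorem count_swap : (u' ++ [y, x] ++ u'').count ltrA = (u' ++ [x, y] ++ u'').count ltrA :=
  (((List.Perm.swap x y []).append_left u').append_right u'').count_eq _

theorem count_lt_count_swap (hxy : x ≠ y) : u'.count ltrA < (u' ++ [x, y] ++ u'').count ltrA := by
  cases x <;> cases y <;> simp_all [ltrA]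

theorem alphaH_swap_of_ne {k : ℕ} (hk : k ≠ u'.count ltrA) :
    alphaH (u' ++ [x, y] ++ u'') k = alphaH (u' ++ [y, x] ++ u'') k := by
  simp only [List.append_assoc, List.cons_append, List.nil_append]
  rcases hk.lt_or_gt with hk | hk
  · rw [alphaH_append_of_lt _ hk, alphaH_append_of_lt _ hk]
  · rw [alphaH_append_of_le _ hk.le, alphaH_append_of_le _ hk.le,
      alphaH_cons_cons_comm _ _ _ (by omega)]

theorem alphaH_swap_count (hxy : x ≠ y) :
    alphaH (u' ++ [x, y] ++ u'') (u'.count ltrA) =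
        alphaH (u' ++ [y, x] ++ u'') (u'.count ltrA) + 1 ∨
      alphaH (u' ++ [y, x] ++ u'') (u'.count ltrA) =
        alphaH (u' ++ [x, y] ++ u'') (u'.count ltrA) + 1 := by
  simp only [List.append_assoc, List.cons_append, List.nil_append,
    alphaH_append_of_le _ le_rfl, Nat.sub_self]
  cases x <;> cases y <;> simp_all [alphaH, ltrA]

end Swap

theorem swap_not_vertex_general (u' u'' : List Bool) (x y : Bool) (hxy : x ≠ y)
    (hA : convexHull ℝ (gammaA (u' ++ [x, y] ++ u'')) =
      convexHull ℝ (gammaA (u' ++ [y, x] ++ u''))) :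
    ∃ i : ℕ, i < (u' ++ [x, y] ++ u'').count ltrA ∧ 0 < i ∧
      i < (u' ++ [x, y] ++ u'').count ltrA - 1 ∧
      (∀ k < (u' ++ [x, y] ++ u'').count ltrA, k ≠ i →
        alphaH (u' ++ [x, y] ++ u'') k = alphaH (u' ++ [y, x] ++ u'') k) ∧
      alphaH (u' ++ [x, y] ++ u'') i ≠ alphaH (u' ++ [y, x] ++ u'') i ∧
      (alphaH (u' ++ [x, y] ++ u'') i = alphaH (u' ++ [y, x] ++ u'') i + 1 ∨
        alphaH (u' ++ [y, x] ++ u'') i = alphaH (u' ++ [x, y] ++ u'') i + 1) ∧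
      ((i : ℝ), (alphaH (u' ++ [x, y] ++ u'') i : ℝ)) ∉
        (convexHull ℝ (gammaA (u' ++ [x, y] ++ u''))).extremePoints ℝ ∧
      ((i : ℝ), (alphaH (u' ++ [y, x] ++ u'') i : ℝ)) ∉
        (convexHull ℝ (gammaA (u' ++ [x, y] ++ u''))).extremePoints ℝ := by
  have hp := count_lt_count_swap u' u'' hxy
  have hdiff := alphaH_swap_count u' u'' hxy
  set p := u'.count ltrA
  have hne : alphaH (u' ++ [x, y] ++ u'') p ≠ alphaH (u' ++ [y, x] ++ u'') p := by omega
  have hmem : ((p : ℝ), (alphaH (u' ++ [x, y] ++ u'') p : ℝ)) ∈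
      convexHull ℝ (gammaA (u' ++ [y, x] ++ u'')) :=
    hA ▸ subset_convexHull ℝ _ (mk_mem_gammaA hp)
  have hinterior : ¬(p = 0 ∨ p + 1 = (u' ++ [x, y] ++ u'').count ltrA) := by
    rw [← count_swap]
    exact fun hend => hne (by exact_mod_cast eq_alphaH_of_mem_convexHull_of_endpoint hend hmem)
  refine ⟨p, hp, by omega, by omega, fun k _ hk => alphaH_swap_of_ne u' u'' hk, hne, hdiff,
    fun h => hne ?_, fun h => hne (by exact_mod_cast (eq_alphaH_of_mem_extremePoints h).symm)⟩
  rw [hA] at h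
  exact_mod_cast eq_alphaH_of_mem_extremePoints h

/-- If `u ∼_2 v` where `v` is obtained from `u` by a single adjacent swap of
distinct letters, then the paths of `u` and `v` differ at exactly one lattice
point of each height, the differing heights differ by one, the index is interior,
and neither differing point is a vertex of the common `a`-height polygon. -/
theorem swap_not_vertex (u' u'' : List Bool) (x y : Bool) (hxy : x ≠ y)
    (hA : convexHull ℝ (gammaA (u' ++ [x, y] ++ u'')) =
      convexHull ℝ (gammaA (u' ++ [y, x] ++ u'')))
    (hB : convexHull ℝ (gammaB (u' ++ [x, y] ++ u'')) =
      convexHull ℝ (gammaB (u' ++ [y, x] ++ u''))) :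
    ∃ i : ℕ, i < (u' ++ [x, y] ++ u'').count ltrA ∧ 0 < i ∧
      i < (u' ++ [x, y] ++ u'').count ltrA - 1 ∧
      (∀ k < (u' ++ [x, y] ++ u'').count ltrA, k ≠ i →
        alphaH (u' ++ [x, y] ++ u'') k = alphaH (u' ++ [y, x] ++ u'') k) ∧
      alphaH (u' ++ [x, y] ++ u'') i ≠ alphaH (u' ++ [y, x] ++ u'') i ∧
      (alphaH (u' ++ [x, y] ++ u'') i = alphaH (u' ++ [y, x] ++ u'') i + 1 ∨
        alphaH (u' ++ [y, x] ++ u'') i = alphaH (u' ++ [x, y] ++ u'') i + 1) ∧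
      ((i : ℝ), (alphaH (u' ++ [x, y] ++ u'') i : ℝ)) ∉
        (convexHull ℝ (gammaA (u' ++ [x, y] ++ u''))).extremePoints ℝ ∧
      ((i : ℝ), (alphaH (u' ++ [y, x] ++ u'') i : ℝ)) ∉
        (convexHull ℝ (gammaA (u' ++ [x, y] ++ u''))).extremePoints ℝ :=
  swap_not_vertex_general u' u'' x y hxy hA
end
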